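/- arXiv:1401.1922 — 8 statements merged into one kernel-verified Lean document; each statement's English description precedes it below -/
import Mathlib

section
/- Let 𝔤 be a quadratic Lie algebra with ad-invariant nondegenerate symmetric form (·,·), let ⟨·,·⟩ be an inner product on 𝔤, let θ be the unique linear endomorphism with (X,Y) = ⟨X, θ(Y)⟩ for all X, Y (θ is invertible and self-adjoint with respect to ⟨·,·⟩), and let ∇ be defined by the Koszul formula. Then for all X, Y ∈ 𝔤: ∇_X Y = (1/2)([X,Y] − θ[θ⁻¹X, Y] + θ[X, θ⁻¹Y]). -/
/-! Self-adjointness of `θ` gives `⟨θ u, w⟩ = (u, w)`, so ad-invariance and symmetry of `(·,·)`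
yield `⟨θ[θ⁻¹X, Y], W⟩ = ⟨[Y, W], X⟩` and `⟨θ[X, θ⁻¹Y], W⟩ = ⟨[W, X], Y⟩`. Hence the right-hand
side pairs with every `W` exactly as the Koszul formula prescribes for `∇_X Y`, and positivity of
`⟨·,·⟩` forces equality. -/

theorem eq_of_forall_apply_eq_of_pos {R M : Type*} [CommRing R] [PartialOrder R]
    [AddCommGroup M] [Module R M] {inn : M →ₗ[R] M →ₗ[R] R}
    (hpos : ∀ v : M, v ≠ 0 → 0 < inn v v) {u v : M} (h : ∀ w, inn u w = inn v w) : u = v := by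
  by_contra hne
  have hlt := hpos (u - v) (sub_ne_zero.mpr hne)
  rw [LinearMap.map_sub₂, h, sub_self] at hlt
  exact lt_irrefl 0 hlt

section QuadraticLieAlgebra

variable {R L : Type*} [CommRing R] [LieRing L] [Module R L] {B : L →ₗ[R] L →ₗ[R] R}

theorem apply_lie_eq_apply_lie_of_invariant (hBinv : ∀ X Y Z : L, B ⁅X, Y⁆ Z + B Y ⁅X, Z⁆ = 0)
    (a b c : L) : B ⁅a, b⁆ c = B a ⁅b, c⁆ := by
  rw [← lie_skew, map_neg, LinearMap.neg_apply, neg_eq_iff_add_eq_zero]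
  exact hBinv b a c

variable {inn : L →ₗ[R] L →ₗ[R] R} {θ : L ≃ₗ[R] L}

theorem inn_equiv_lie_symm_left (hBsymm : ∀ u v : L, B u v = B v u)
    (hBinv : ∀ X Y Z : L, B ⁅X, Y⁆ Z + B Y ⁅X, Z⁆ = 0) (hθ : ∀ u v : L, B u v = inn u (θ v))
    (hθsa : ∀ u v : L, inn (θ u) v = inn u (θ v)) (X Y W : L) :
    inn (θ ⁅θ.symm X, Y⁆) W = inn ⁅Y, W⁆ X := by
  rw [hθsa, ← hθ, apply_lie_eq_apply_lie_of_invariant hBinv, hBsymm, hθ, θ.apply_symm_apply]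

theorem inn_equiv_lie_symm_right (hBsymm : ∀ u v : L, B u v = B v u)
    (hBinv : ∀ X Y Z : L, B ⁅X, Y⁆ Z + B Y ⁅X, Z⁆ = 0) (hθ : ∀ u v : L, B u v = inn u (θ v))
    (hθsa : ∀ u v : L, inn (θ u) v = inn u (θ v)) (X Y W : L) :
    inn (θ ⁅X, θ.symm Y⁆) W = inn ⁅W, X⁆ Y := by
  rw [hθsa, ← hθ, hBsymm, ← apply_lie_eq_apply_lie_of_invariant hBinv, hθ, θ.apply_symm_apply]

end QuadraticLieAlgebra

theorem koszul_connection_formula_on_quadratic_lie_algebra_general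
    (L : Type) [LieRing L] [LieAlgebra ℝ L]
    (B : L →ₗ[ℝ] L →ₗ[ℝ] ℝ)
    (hBsymm : ∀ u v : L, B u v = B v u)
    (hBinv : ∀ X Y Z : L, B ⁅X, Y⁆ Z + B Y ⁅X, Z⁆ = 0)
    (inn : L →ₗ[ℝ] L →ₗ[ℝ] ℝ)
    (hinnpos : ∀ v : L, v ≠ 0 → 0 < inn v v)
    (θ : L ≃ₗ[ℝ] L)
    (hθ : ∀ u v : L, B u v = inn u (θ v))
    (hθsa : ∀ u v : L, inn (θ u) v = inn u (θ v))
    (nab : L →ₗ[ℝ] L →ₗ[ℝ] L)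
    (hkoszul : ∀ U V W : L, inn (nab U V) W =
      (1/2) * (inn ⁅U, V⁆ W - inn ⁅V, W⁆ U + inn ⁅W, U⁆ V)) :
    ∀ X Y : L, nab X Y =
      (1/2 : ℝ) • (⁅X, Y⁆ - θ ⁅θ.symm X, Y⁆ + θ ⁅X, θ.symm Y⁆) := by
  intro X Y
  refine eq_of_forall_apply_eq_of_pos hinnpos fun W => ?_
  rw [hkoszul, map_smul, LinearMap.smul_apply, map_add, map_sub, LinearMap.add_apply,
    LinearMap.sub_apply, inn_equiv_lie_symm_left hBsymm hBinv hθ hθsa,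
    inn_equiv_lie_symm_right hBsymm hBinv hθ hθsa, smul_eq_mul]

/-- On a quadratic Lie algebra with inner product `⟨·,·⟩`, letting `θ` be the
invertible self-adjoint endomorphism with `(X,Y) = ⟨X, θ Y⟩`, the Koszul
connection is given by `∇_X Y = (1/2)([X,Y] − θ[θ⁻¹X, Y] + θ[X, θ⁻¹Y])`. -/
theorem koszul_connection_formula_on_quadratic_lie_algebra
    (L : Type) [LieRing L] [LieAlgebra ℝ L] [FiniteDimensional ℝ L]
    (B : L →ₗ[ℝ] L →ₗ[ℝ] ℝ)
    (hBsymm : ∀ u v : L, B u v = B v u)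
    (hBnd : ∀ u : L, (∀ v : L, B u v = 0) → u = 0)
    (hBinv : ∀ X Y Z : L, B ⁅X, Y⁆ Z + B Y ⁅X, Z⁆ = 0)
    (inn : L →ₗ[ℝ] L →ₗ[ℝ] ℝ)
    (hinnsymm : ∀ u v : L, inn u v = inn v u)
    (hinnpos : ∀ v : L, v ≠ 0 → 0 < inn v v)
    (θ : L ≃ₗ[ℝ] L)
    (hθ : ∀ u v : L, B u v = inn u (θ v))
    (hθsa : ∀ u v : L, inn (θ u) v = inn u (θ v))
    (nab : L →ₗ[ℝ] L →ₗ[ℝ] L)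
    (hkoszul : ∀ U V W : L, inn (nab U V) W =
      (1/2) * (inn ⁅U, V⁆ W - inn ⁅V, W⁆ U + inn ⁅W, U⁆ V)) :
    ∀ X Y : L, nab X Y =
      (1/2 : ℝ) • (⁅X, Y⁆ - θ ⁅θ.symm X, Y⁆ + θ ⁅X, θ.symm Y⁆) :=
  koszul_connection_formula_on_quadratic_lie_algebra_general L B hBsymm hBinv inn hinnpos θ hθ hθsa
    nab hkoszul
end

section
/- Let 𝔤 be a quadratic Lie algebra with inner product ⟨·,·⟩, let {X_1,…,X_n} be a ⟨·,·⟩-orthonormal basis with (X_i,X_j) = λ_i δ_ij (λ_i ≠ 0), set μ_i = 1/λ_i, and let ∇ be defined by the Koszul formula. Then ∇_{X_i} X_j = (1/2) Σ_{l=1}^n ((μ_l − μ_i + μ_j)/μ_l) C_ij^l X_l for all i, j. -/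
/-! The `l`-th coordinate of `∇_{X_i} X_j` in the orthonormal basis is, by the Koszul formula,
`(C_ij^l − C_jl^i + C_li^j) / 2`. Invariance of `(·,·)` makes `([X, Y], Z)` cyclic, which on the
basis reads `λ_l C_ij^l = λ_j C_li^j = λ_i C_jl^i`; so the last two constants are `C_ij^l`
rescaled by `λ_l / λ_j = μ_j / μ_l` and `λ_l / λ_i = μ_i / μ_l`. -/

open Module

namespace Module.Basis

variable {R M ι : Type*} [CommSemiring R] [AddCommMonoid M] [Module R M] [Fintype ι]
  [DecidableEq ι] (f : M →ₗ[R] M →ₗ[R] R) (b : Basis ι R M) {d : ι → R}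

theorem bilin_apply_right_of_diagonal (hf : ∀ i j, f (b i) (b j) = if i = j then d i else 0)
    (u : M) (k : ι) : f u (b k) = b.repr u k * d k := by
  conv_lhs => rw [← b.sum_repr u]
  simp only [map_sum, map_smul, LinearMap.sum_apply, LinearMap.smul_apply, hf, smul_eq_mul,
    mul_ite, mul_zero, Finset.sum_ite_eq', Finset.mem_univ, if_true]

theorem bilin_apply_left_of_diagonal (hf : ∀ i j, f (b i) (b j) = if i = j then d i else 0)
    (u : M) (k : ι) : f (b k) u = b.repr u k * d k := by
  conv_lhs => rw [← b.sum_repr u]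
  simp only [map_sum, map_smul, hf, smul_eq_mul, mul_ite, mul_zero, Finset.sum_ite_eq,
    Finset.mem_univ, if_true]

theorem sum_bilin_smul_of_orthonormal (hf : ∀ i j, f (b i) (b j) = if i = j then 1 else 0)
    (u : M) : ∑ k, f u (b k) • b k = u := by
  simp only [b.bilin_apply_right_of_diagonal f hf, mul_one, b.sum_repr]

end Module.Basis

theorem LinearMap.BilinForm.lieInvariant.apply_lie_cyclic {R L : Type*} [CommRing R] [LieRing L]
    [LieAlgebra R L] {Φ : LinearMap.BilinForm R L} (hΦ : Φ.lieInvariant L) (x y z : L) :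
    Φ ⁅x, y⁆ z = Φ y ⁅z, x⁆ := by
  rw [hΦ, ← lie_skew x z, map_neg, neg_neg]

section StructureConstants

variable {L ι : Type*} [LieRing L] [LieAlgebra ℝ L] [Fintype ι]
  {b : Basis ι ℝ L} {C : ι → ι → ι → ℝ}

theorem Module.Basis.repr_lie_of_structureConstants
    (hC : ∀ i j, ⁅b i, b j⁆ = ∑ l, C i j l • b l) (i j : ι) :
    b.repr ⁅b i, b j⁆ = C i j := by
  rw [hC, b.repr_sum_self]

theorem structureConstants_mul_diagonal_cyclic [DecidableEq ι] {Φ : LinearMap.BilinForm ℝ L}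
    (hΦ : Φ.lieInvariant L) {lam : ι → ℝ}
    (hΦb : ∀ i j, Φ (b i) (b j) = if i = j then lam i else 0)
    (hC : ∀ i j, ⁅b i, b j⁆ = ∑ l, C i j l • b l) (i j k : ι) :
    C i j k * lam k = C k i j * lam j := by
  have h := hΦ.apply_lie_cyclic (b i) (b j) (b k)
  rwa [b.bilin_apply_right_of_diagonal Φ hΦb, b.bilin_apply_left_of_diagonal Φ hΦb,
    b.repr_lie_of_structureConstants hC, b.repr_lie_of_structureConstants hC] at h

end StructureConstants

theorem koszul_connection_structure_constants_formula_general
    (L : Type) [LieRing L] [LieAlgebra ℝ L]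
    (B : L →ₗ[ℝ] L →ₗ[ℝ] ℝ)
    (hBinv : ∀ X Y Z : L, B ⁅X, Y⁆ Z + B Y ⁅X, Z⁆ = 0)
    (inn : L →ₗ[ℝ] L →ₗ[ℝ] ℝ)
    (nab : L →ₗ[ℝ] L →ₗ[ℝ] L)
    (hkoszul : ∀ U V W : L, inn (nab U V) W =
      (1/2) * (inn ⁅U, V⁆ W - inn ⁅V, W⁆ U + inn ⁅W, U⁆ V))
    (nn : ℕ) (b : Module.Basis (Fin nn) ℝ L)
    (hortho : ∀ i j : Fin nn, inn (b i) (b j) = if i = j then 1 else 0)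
    (lam : Fin nn → ℝ) (hlam : ∀ i, lam i ≠ 0)
    (hBval : ∀ i j : Fin nn, B (b i) (b j) = if i = j then lam i else 0)
    (μ : Fin nn → ℝ) (hμ : ∀ i, μ i = (lam i)⁻¹)
    (C : Fin nn → Fin nn → Fin nn → ℝ)
    (hC : ∀ i j : Fin nn, ⁅b i, b j⁆ = ∑ l, C i j l • b l) :
    ∀ i j : Fin nn,
      nab (b i) (b j) =
        ∑ l, ((1/2) * ((μ l - μ i + μ j) / μ l) * C i j l) • b l := by
  intro i j
  have hB : LinearMap.BilinForm.lieInvariant L B := fun x y z =>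
    eq_neg_of_add_eq_zero_left (hBinv x y z)
  have hinn_lie : ∀ a c d, inn ⁅b a, b c⁆ (b d) = C a c d := fun a c d => by
    rw [b.bilin_apply_right_of_diagonal inn hortho, mul_one, b.repr_lie_of_structureConstants hC]
  rw [← b.sum_bilin_smul_of_orthonormal inn hortho (nab (b i) (b j))]
  refine Finset.sum_congr rfl fun l _ => congrArg (· • b l) ?_
  have hlij := structureConstants_mul_diagonal_cyclic hB hBval hC i j l
  have hjli := structureConstants_mul_diagonal_cyclic hB hBval hC l i j
  have hC_jli : C j l i = C i j l * lam l / lam i := by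
    rw [eq_div_iff (hlam i), hlij, hjli]
  have hC_lij : C l i j = C i j l * lam l / lam j := by
    rw [eq_div_iff (hlam j), hlij]
  rw [hkoszul, hinn_lie, hinn_lie, hinn_lie, hC_jli, hC_lij, hμ, hμ, hμ]
  field_simp [hlam i, hlam j, hlam l]

/-- On a quadratic Lie algebra with inner product and orthonormal basis `X_i`
with `(X_i,X_j) = λ_i δ_ij`, `μ_i = 1/λ_i`, the Koszul connection satisfies
`∇_{X_i} X_j = (1/2) Σ_l ((μ_l − μ_i + μ_j)/μ_l) C_ij^l X_l`. -/
theorem koszul_connection_structure_constants_formula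
    (L : Type) [LieRing L] [LieAlgebra ℝ L] [FiniteDimensional ℝ L]
    (B : L →ₗ[ℝ] L →ₗ[ℝ] ℝ)
    (hBsymm : ∀ u v : L, B u v = B v u)
    (hBnd : ∀ u : L, (∀ v : L, B u v = 0) → u = 0)
    (hBinv : ∀ X Y Z : L, B ⁅X, Y⁆ Z + B Y ⁅X, Z⁆ = 0)
    (inn : L →ₗ[ℝ] L →ₗ[ℝ] ℝ)
    (hinnsymm : ∀ u v : L, inn u v = inn v u)
    (hinnpos : ∀ v : L, v ≠ 0 → 0 < inn v v)
    (nab : L →ₗ[ℝ] L →ₗ[ℝ] L)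
    (hkoszul : ∀ U V W : L, inn (nab U V) W =
      (1/2) * (inn ⁅U, V⁆ W - inn ⁅V, W⁆ U + inn ⁅W, U⁆ V))
    (nn : ℕ) (b : Module.Basis (Fin nn) ℝ L)
    (hortho : ∀ i j : Fin nn, inn (b i) (b j) = if i = j then 1 else 0)
    (lam : Fin nn → ℝ) (hlam : ∀ i, lam i ≠ 0)
    (hBval : ∀ i j : Fin nn, B (b i) (b j) = if i = j then lam i else 0)
    (μ : Fin nn → ℝ) (hμ : ∀ i, μ i = (lam i)⁻¹)
    (C : Fin nn → Fin nn → Fin nn → ℝ)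
    (hC : ∀ i j : Fin nn, ⁅b i, b j⁆ = ∑ l, C i j l • b l) :
    ∀ i j : Fin nn,
      nab (b i) (b j) =
        ∑ l, ((1/2) * ((μ l - μ i + μ j) / μ l) * C i j l) • b l :=
  koszul_connection_structure_constants_formula_general L B hBinv inn nab hkoszul nn b hortho lam
    hlam hBval μ hμ C hC
end

section
/- Let 𝔤 be a quadratic Lie algebra with inner product ⟨·,·⟩, let ∇ be defined by the Koszul formula, and let Ric be the algebraically defined Ricci tensor. Then for all X, Y ∈ 𝔤: Ric(X,Y) = −tr((∇_X − ad X) ∘ (∇_Y − ad Y)), where ∇_X denotes the endomorphism W ↦ ∇_X W. -/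
/-!
The Koszul formula makes `∇` torsion-free, `∇_W Z = ∇_Z W - [Z, W]`, and makes each `∇_Z`
skew-adjoint for `⟨·,·⟩`; invariance makes each `ad Z` skew-adjoint for `(·,·)`. An
endomorphism that is skew-adjoint for a nondegenerate form is traceless (it is conjugate,
through the form, to minus its transpose). Substituting torsion-freeness into the Ricci
trace, its first term becomes `tr ∇_Z - tr (ad Z) = 0`, and the remaining two combine, by
cyclicity of the trace, into `-tr ((∇_X - ad X) ∘ (∇_Y - ad Y))`.
-/

open LinearMap

theorem LinearMap.BilinForm.trace_eq_zero_of_isSkewAdjoint {K V : Type*} [Field K] [CharZero K]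
    [AddCommGroup V] [Module K V] [FiniteDimensional K V] {B : LinearMap.BilinForm K V}
    (hB : B.Nondegenerate) {A : Module.End K V} (hA : B.IsSkewAdjoint A) :
    trace K V A = 0 := by
  have hconj : (B.toDual hB).conj A = Module.Dual.transpose (R := K) (-A) := by
    ext φ v
    obtain ⟨u, rfl⟩ := (B.toDual hB).surjective φ
    simp [LinearEquiv.conj_apply, toDual_def, hA u v, Module.Dual.transpose_apply]
  have htrace := trace_conj' A (B.toDual hB)
  rw [hconj, trace_transpose', map_neg] at htrace
  exact self_eq_neg.mp htrace.symm

theorem LinearMap.BilinForm.trace_toEnd_eq_zero_of_lieInvariant {K L M : Type*} [Field K]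
    [CharZero K] [LieRing L] [LieAlgebra K L] [AddCommGroup M] [Module K M] [LieRingModule L M]
    [LieModule K L M] [FiniteDimensional K M] {Φ : LinearMap.BilinForm K M}
    (hΦ : Φ.Nondegenerate) (hΦ_inv : Φ.lieInvariant L) (x : L) :
    trace K M (LieModule.toEnd K L M x) = 0 :=
  Φ.trace_eq_zero_of_isSkewAdjoint hΦ fun y z => by simp [hΦ_inv x y z]

section Koszul

variable {K L : Type*} [Field K] [LieRing L] [LieAlgebra K L]

def IsKoszulConnection (inn : LinearMap.BilinForm K L) (nab : L →ₗ[K] L →ₗ[K] L) : Prop :=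
  ∀ U V W : L, inn (nab U V) W = (1/2) * (inn ⁅U, V⁆ W - inn ⁅V, W⁆ U + inn ⁅W, U⁆ V)

theorem LinearMap.BilinForm.apply_lie_swap (inn : LinearMap.BilinForm K L) (a b c : L) :
    inn ⁅a, b⁆ c = -inn ⁅b, a⁆ c := by
  rw [← lie_skew, map_neg, LinearMap.neg_apply]

variable {inn : LinearMap.BilinForm K L} {nab : L →ₗ[K] L →ₗ[K] L}

theorem IsKoszulConnection.flip_eq_sub_ad [CharZero K] (h : IsKoszulConnection inn nab)
    (hinn : inn.SeparatingLeft) (V : L) :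
    nab.flip V = nab V - (LieAlgebra.ad K L V : Module.End K L) := by
  ext W
  refine sub_eq_zero.mp (hinn _ fun v => ?_)
  simp only [flip_apply, LinearMap.sub_apply, LieAlgebra.ad_apply, map_sub]
  linear_combination h W V v - h V W v + (1/2 : K) * inn.apply_lie_swap W V v
    - (1/2 : K) * inn.apply_lie_swap v V W + (1/2 : K) * inn.apply_lie_swap v W V

theorem IsKoszulConnection.isSkewAdjoint [CharZero K] (h : IsKoszulConnection inn nab)
    (hsymm : ∀ u v : L, inn u v = inn v u) (Z : L) :
    inn.IsSkewAdjoint (nab Z) := by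
  intro u v
  show inn (nab Z u) v = inn u (-nab Z v)
  rw [map_neg, hsymm u]
  linear_combination h Z u v + h Z v u + (1/2 : K) * inn.apply_lie_swap u Z v
    - (1/2 : K) * inn.apply_lie_swap v u Z + (1/2 : K) * inn.apply_lie_swap v Z u

end Koszul

theorem ricci_trace_formula_quadratic_general
    (L : Type) [LieRing L] [LieAlgebra ℝ L] [FiniteDimensional ℝ L]
    (B : L →ₗ[ℝ] L →ₗ[ℝ] ℝ)
    (hBnd : ∀ u : L, (∀ v : L, B u v = 0) → u = 0)
    (hBinv : ∀ X Y Z : L, B ⁅X, Y⁆ Z + B Y ⁅X, Z⁆ = 0)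
    (inn : L →ₗ[ℝ] L →ₗ[ℝ] ℝ)
    (hinnsymm : ∀ u v : L, inn u v = inn v u)
    (hinnpos : ∀ v : L, v ≠ 0 → 0 < inn v v)
    (nab : L →ₗ[ℝ] L →ₗ[ℝ] L)
    (hkoszul : ∀ U V W : L, inn (nab U V) W =
      (1/2) * (inn ⁅U, V⁆ W - inn ⁅V, W⁆ U + inn ⁅W, U⁆ V))
    (Ric : L → L → ℝ)
    -- `Ric(X,Y) = tr(W ↦ ∇_W(∇_X Y) − ∇_X(∇_W Y) − ∇_{[W,X]} Y)`
    (hRic : ∀ U V : L, Ric U V = LinearMap.trace ℝ L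
      (nab.flip (nab U V) - nab U ∘ₗ nab.flip V
        + nab.flip V ∘ₗ (LieAlgebra.ad ℝ L U : L →ₗ[ℝ] L))) :
    ∀ X Y : L, Ric X Y =
      - LinearMap.trace ℝ L
        ((nab X - (LieAlgebra.ad ℝ L X : L →ₗ[ℝ] L))
          ∘ₗ (nab Y - (LieAlgebra.ad ℝ L Y : L →ₗ[ℝ] L))) := by
  have hinn : inn.SeparatingLeft := fun u hu => by
    by_contra hne
    exact (hinnpos u hne).ne' (hu u)
  have htorsion := IsKoszulConnection.flip_eq_sub_ad hkoszul hinn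
  have htr_nab (Z : L) : trace ℝ L (nab Z) = 0 :=
    LinearMap.BilinForm.trace_eq_zero_of_isSkewAdjoint (.ofSeparatingLeft hinn)
      (IsKoszulConnection.isSkewAdjoint hkoszul hinnsymm Z)
  have htr_ad (Z : L) : trace ℝ L (LieAlgebra.ad ℝ L Z) = 0 :=
    LinearMap.BilinForm.trace_toEnd_eq_zero_of_lieInvariant (Φ := B) (.ofSeparatingLeft hBnd)
      (fun x y z => eq_neg_of_add_eq_zero_left (hBinv x y z)) Z
  intro X Y
  rw [hRic, htorsion, htorsion, map_add, map_sub, map_sub, htr_nab, htr_ad,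
    trace_comp_comm' (LieAlgebra.ad ℝ L X : Module.End ℝ L), sub_comp, map_sub]
  ring

/-- On a quadratic Lie algebra with inner product and Koszul connection `∇`,
the algebraic Ricci tensor satisfies
`Ric(X,Y) = −tr((∇_X − ad X) ∘ (∇_Y − ad Y))`. -/
theorem ricci_trace_formula_quadratic
    (L : Type) [LieRing L] [LieAlgebra ℝ L] [FiniteDimensional ℝ L]
    (B : L →ₗ[ℝ] L →ₗ[ℝ] ℝ)
    (hBsymm : ∀ u v : L, B u v = B v u)
    (hBnd : ∀ u : L, (∀ v : L, B u v = 0) → u = 0)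
    (hBinv : ∀ X Y Z : L, B ⁅X, Y⁆ Z + B Y ⁅X, Z⁆ = 0)
    (inn : L →ₗ[ℝ] L →ₗ[ℝ] ℝ)
    (hinnsymm : ∀ u v : L, inn u v = inn v u)
    (hinnpos : ∀ v : L, v ≠ 0 → 0 < inn v v)
    (nab : L →ₗ[ℝ] L →ₗ[ℝ] L)
    (hkoszul : ∀ U V W : L, inn (nab U V) W =
      (1/2) * (inn ⁅U, V⁆ W - inn ⁅V, W⁆ U + inn ⁅W, U⁆ V))
    (Ric : L → L → ℝ)
    -- `Ric(X,Y) = tr(W ↦ ∇_W(∇_X Y) − ∇_X(∇_W Y) − ∇_{[W,X]} Y)`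
    (hRic : ∀ U V : L, Ric U V = LinearMap.trace ℝ L
      (nab.flip (nab U V) - nab U ∘ₗ nab.flip V
        + nab.flip V ∘ₗ (LieAlgebra.ad ℝ L U : L →ₗ[ℝ] L))) :
    ∀ X Y : L, Ric X Y =
      - LinearMap.trace ℝ L
        ((nab X - (LieAlgebra.ad ℝ L X : L →ₗ[ℝ] L))
          ∘ₗ (nab Y - (LieAlgebra.ad ℝ L Y : L →ₗ[ℝ] L))) :=
  ricci_trace_formula_quadratic_general L B hBnd hBinv inn hinnsymm hinnpos nab hkoszul Ric hRic
end

section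
/- Let 𝔤 be a quadratic Lie algebra with inner product ⟨·,·⟩, let {X_1,…,X_n} be a ⟨·,·⟩-orthonormal basis with (X_i,X_j) = λ_i δ_ij (λ_i ≠ 0), set μ_i = 1/λ_i, and let Ric be the algebraically defined Ricci tensor of the Koszul connection. Then for all j, k: Ric(X_j, X_k) = −(1/2) Σ_{i<l} ((μ_l − μ_i)² − μ_k μ_j) · (C_ki^l/μ_l) · (C_ji^l/μ_l). -/
/-!
Relative to the quadratic form, `E u v w = B ⁅X_u, X_v⁆ X_w = C_uv^w / μ_w` is totally
antisymmetric, by ad-invariance. Koszul's formula then gives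
`⟨∇_{X_u} X_v, X_w⟩ = ½ (μ_v + μ_w - μ_u) E u v w`, so the divergence term of the Ricci trace
vanishes and the other two terms are quadratic in `E`. Pairing the `(i, l)` and `(l, i)` summands
(with `E k l i * E j l i = E k i l * E j i l`) collapses their coefficient to
`-½ ((μ_l - μ_i)² - μ_k μ_j)`.
-/

open Module

theorem Fintype.sum_sum_eq_sum_sum_lt_add_sum_diag {ι M : Type*} [Fintype ι] [LinearOrder ι]
    [AddCommMonoid M] (f : ι → ι → M) :
    ∑ i, ∑ l, f i l = ∑ i, ∑ l, (if i < l then f i l + f l i else 0) + ∑ i, f i i := by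
  have hsplit : ∀ i l, f i l = (if i < l then f i l else 0) + (if l < i then f i l else 0)
      + (if i = l then f i l else 0) := by
    intro i l
    rcases lt_trichotomy i l with h | rfl | h
    · simp [h, h.not_gt, h.ne]
    · simp
    · simp [h, h.not_gt, h.ne']
  have hswap : ∑ i, ∑ l, (if l < i then f i l else 0) = ∑ i, ∑ l, (if i < l then f l i else 0) :=
    Finset.sum_comm
  simp_rw [ite_add_zero]
  conv_lhs => enter [2, i, 2, l]; rw [hsplit i l]
  simp only [Finset.sum_add_distrib, hswap, Finset.sum_ite_eq, Finset.mem_univ, if_true]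

section DiagonalForm

variable {R M ι : Type*} [CommRing R] [AddCommGroup M] [Module R M] [Fintype ι] [DecidableEq ι]
  {B : M →ₗ[R] M →ₗ[R] R} {b : Basis ι R M}

theorem apply_basis_right_of_diagonal {d : ι → R}
    (hB : ∀ i j, B (b i) (b j) = if i = j then d i else 0) (v : M) (i : ι) :
    B v (b i) = d i * b.repr v i := by
  conv_lhs => rw [← b.sum_repr v]
  simp [hB, mul_comm, -Basis.sum_repr]

theorem apply_basis_left_of_diagonal {d : ι → R}
    (hB : ∀ i j, B (b i) (b j) = if i = j then d i else 0) (v : M) (i : ι) :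
    B (b i) v = d i * b.repr v i := by
  conv_lhs => rw [← b.sum_repr v]
  simp [hB, mul_comm, -Basis.sum_repr]

theorem repr_eq_apply_basis_of_orthonormal (hb : ∀ i j, B (b i) (b j) = if i = j then 1 else 0)
    (v : M) (i : ι) : b.repr v i = B v (b i) := by
  simpa using (apply_basis_right_of_diagonal (d := fun _ => 1) hb v i).symm

theorem apply_map_eq_sum_of_orthonormal (hb : ∀ i j, B (b i) (b j) = if i = j then 1 else 0)
    (T : M →ₗ[R] M) (v w : M) : B (T v) w = ∑ p, B v (b p) * B (T (b p)) w := by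
  conv_lhs => rw [← b.sum_repr v]
  simp [repr_eq_apply_basis_of_orthonormal hb, -Basis.sum_repr]

theorem trace_eq_sum_of_orthonormal (hb : ∀ i j, B (b i) (b j) = if i = j then 1 else 0)
    (f : M →ₗ[R] M) : LinearMap.trace R M f = ∑ i, B (f (b i)) (b i) := by
  simp [LinearMap.trace_eq_matrix_trace R b f, Matrix.trace, LinearMap.toMatrix_apply,
    repr_eq_apply_basis_of_orthonormal hb]

end DiagonalForm

section InvariantForm

variable {R L ι : Type*} [CommRing R] [LieRing L] [LieAlgebra R L] [Fintype ι]
  {B : L →ₗ[R] L →ₗ[R] R} {b : Basis ι R L}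

theorem apply_lie_eq_apply_lie_of_invariant_s6 (hB : ∀ x y z : L, B ⁅x, y⁆ z + B y ⁅x, z⁆ = 0)
    (x y z : L) : B ⁅x, y⁆ z = B x ⁅y, z⁆ := by
  rw [← lie_skew, map_neg, LinearMap.neg_apply]
  exact neg_eq_of_add_eq_zero_right (hB y x z)

theorem trace_ricci_eq_sum_of_orthonormal [DecidableEq ι]
    (hb : ∀ i j, B (b i) (b j) = if i = j then 1 else 0)
    (nab : L →ₗ[R] L →ₗ[R] L) (U V : L) :
    LinearMap.trace R L (nab.flip (nab U V) - nab U ∘ₗ nab.flip V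
        + nab.flip V ∘ₗ (LieAlgebra.ad R L U : L →ₗ[R] L)) =
      ∑ m, ∑ p, (B (nab U V) (b p) * B (nab (b m) (b p)) (b m)
        - B (nab (b m) V) (b p) * B (nab U (b p)) (b m)
        + B ⁅U, b m⁆ (b p) * B (nab (b p) V) (b m)) := by
  rw [trace_eq_sum_of_orthonormal hb]
  refine Finset.sum_congr rfl fun m _ => ?_
  have hlie := apply_map_eq_sum_of_orthonormal hb (nab.flip V) ⁅U, b m⁆ (b m)
  simp only [LinearMap.flip_apply] at hlie
  simp only [LinearMap.add_apply, LinearMap.sub_apply, LinearMap.comp_apply, LinearMap.flip_apply,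
    LieAlgebra.ad_apply, map_add, map_sub, apply_map_eq_sum_of_orthonormal hb (nab (b m)) (nab U V),
    apply_map_eq_sum_of_orthonormal hb (nab U) (nab (b m) V), hlie, Finset.sum_add_distrib,
    Finset.sum_sub_distrib]

theorem structureConst_eq_repr {C : ι → ι → ι → R} (hC : ∀ i j, ⁅b i, b j⁆ = ∑ l, C i j l • b l)
    (i j l : ι) : C i j l = b.repr ⁅b i, b j⁆ l := by
  rw [hC, b.repr_sum_self]

theorem structureConst_antisymm {C : ι → ι → ι → R} (hC : ∀ i j, ⁅b i, b j⁆ = ∑ l, C i j l • b l)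
    (i j l : ι) : C i j l = -C j i l := by
  rw [structureConst_eq_repr hC, structureConst_eq_repr hC, ← lie_skew, map_neg,
    Finsupp.neg_apply]

theorem structureConst_cyclic {C : ι → ι → ι → R} (hC : ∀ i j, ⁅b i, b j⁆ = ∑ l, C i j l • b l)
    (hBinv : ∀ x y z : L, B ⁅x, y⁆ z + B y ⁅x, z⁆ = 0) [DecidableEq ι] {d : ι → R}
    (hB : ∀ i j, B (b i) (b j) = if i = j then d i else 0) (i j l : ι) :
    d l * C i j l = d i * C j l i := by
  rw [structureConst_eq_repr hC, structureConst_eq_repr hC, ← apply_basis_right_of_diagonal hB,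
    ← apply_basis_left_of_diagonal hB, apply_lie_eq_apply_lie_of_invariant_s6 hBinv]

end InvariantForm

section AlternatingStructureConstants

variable {ι : Type*} {μ : ι → ℝ} {E : ι → ι → ι → ℝ}

theorem christoffel_eq_of_alternating (hcyc : ∀ u v w, E u v w = E v w u)
    {c Γ : ι → ι → ι → ℝ} (hc : ∀ u v w, c u v w = μ w * E u v w)
    (hΓ : ∀ u v w, Γ u v w = 1 / 2 * (c u v w - c v w u + c w u v)) (u v w : ι) :
    Γ u v w = (μ v + μ w - μ u) / 2 * E u v w := by
  rw [hΓ, hc, hc, hc, hcyc w u v, ← hcyc u v w]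
  ring

theorem sum_ricci_terms_eq_of_alternating [Fintype ι] [LinearOrder ι]
    (hcyc : ∀ u v w, E u v w = E v w u) (hskew : ∀ u v w, E u v w = -E v u w)
    {c Γ : ι → ι → ι → ℝ} (hc : ∀ u v w, c u v w = μ w * E u v w)
    (hΓ : ∀ u v w, Γ u v w = (μ v + μ w - μ u) / 2 * E u v w) (x : ι → ℝ) (j k : ι) :
    ∑ m, ∑ p, (x p * Γ m p m - Γ m k p * Γ j p m + c j m p * Γ p k m) =
      -(1 / 2) * ∑ i, ∑ l, if i < l then
        ((μ l - μ i) ^ 2 - μ k * μ j) * E k i l * E j i l else 0 := by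
  have hswap : ∀ u v w, E u v w = -E u w v := fun u v w => by
    rw [hcyc u w v, ← hskew, hcyc]
  have hdiag : ∀ u v, E u v v = 0 := fun u v => by
    have := hswap u v v
    linarith
  set G : ι → ι → ℝ := fun m p =>
    ((μ k + μ m - μ p) * μ p / 2 - (μ k + μ p - μ m) * (μ p + μ m - μ j) / 4) *
      (E k m p * E j m p)
  have hterm : ∀ m p, x p * Γ m p m - Γ m k p * Γ j p m + c j m p * Γ p k m = G m p := by
    intro m p
    rw [hΓ, hΓ, hΓ, hΓ, hc, hcyc m p m, hdiag, hskew m k p, hswap j p m, hcyc p k m]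
    ring
  have hpair : ∀ i l,
      G i l + G l i = -(1 / 2) * (((μ l - μ i) ^ 2 - μ k * μ j) * E k i l * E j i l) := by
    intro i l
    simp only [G]
    rw [hswap k l i, hswap j l i]
    ring
  simp only [hterm]
  rw [Fintype.sum_sum_eq_sum_sum_lt_add_sum_diag G]
  simp only [G, hdiag, mul_zero, Finset.sum_const_zero, add_zero, Finset.mul_sum]
  refine Finset.sum_congr rfl fun i _ => Finset.sum_congr rfl fun l _ => ?_
  split_ifs
  · exact hpair i l
  · rw [mul_zero]

end AlternatingStructureConstants

theorem ricci_structure_constants_formula_quadratic_general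
    (L : Type) [LieRing L] [LieAlgebra ℝ L]
    (B : L →ₗ[ℝ] L →ₗ[ℝ] ℝ)
    (hBinv : ∀ X Y Z : L, B ⁅X, Y⁆ Z + B Y ⁅X, Z⁆ = 0)
    (inn : L →ₗ[ℝ] L →ₗ[ℝ] ℝ)
    (nab : L →ₗ[ℝ] L →ₗ[ℝ] L)
    (hkoszul : ∀ U V W : L, inn (nab U V) W =
      (1/2) * (inn ⁅U, V⁆ W - inn ⁅V, W⁆ U + inn ⁅W, U⁆ V))
    (Ric : L → L → ℝ)
    (hRic : ∀ U V : L, Ric U V = LinearMap.trace ℝ L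
      (nab.flip (nab U V) - nab U ∘ₗ nab.flip V
        + nab.flip V ∘ₗ (LieAlgebra.ad ℝ L U : L →ₗ[ℝ] L)))
    (nn : ℕ) (b : Module.Basis (Fin nn) ℝ L)
    (hortho : ∀ i j : Fin nn, inn (b i) (b j) = if i = j then 1 else 0)
    (lam : Fin nn → ℝ) (hlam : ∀ i, lam i ≠ 0)
    (hBval : ∀ i j : Fin nn, B (b i) (b j) = if i = j then lam i else 0)
    (μ : Fin nn → ℝ) (hμ : ∀ i, μ i = (lam i)⁻¹)
    (C : Fin nn → Fin nn → Fin nn → ℝ)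
    (hC : ∀ i j : Fin nn, ⁅b i, b j⁆ = ∑ l, C i j l • b l) :
    ∀ j k : Fin nn,
      Ric (b j) (b k) =
        -(1/2) * ∑ i : Fin nn, ∑ l : Fin nn,
          if i < l then
            ((μ l - μ i)^2 - μ k * μ j) * (C k i l / μ l) * (C j i l / μ l)
          else 0 := by
  intro j k
  have hdiv : ∀ u v w, C u v w / μ w = lam w * C u v w := fun u v w => by
    rw [hμ, div_inv_eq_mul, mul_comm]
  have hcyc : ∀ u v w, C u v w / μ w = C v w u / μ u := fun u v w => by
    rw [hdiv, hdiv, structureConst_cyclic hC hBinv hBval]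
  have hskew : ∀ u v w, C u v w / μ w = -(C v u w / μ w) := fun u v w => by
    rw [structureConst_antisymm hC, neg_div]
  have hc : ∀ u v w, inn ⁅b u, b v⁆ (b w) = μ w * (C u v w / μ w) := fun u v w => by
    rw [mul_div_cancel₀ _ (by simpa [hμ] using hlam w), structureConst_eq_repr hC,
      repr_eq_apply_basis_of_orthonormal hortho]
  have hΓ := christoffel_eq_of_alternating hcyc hc (fun u v w => hkoszul (b u) (b v) (b w))
  rw [hRic, trace_ricci_eq_sum_of_orthonormal hortho]
  exact sum_ricci_terms_eq_of_alternating hcyc hskew hc hΓ _ j k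

/-- Ricci curvature formula on a quadratic Lie algebra in terms of the
structure constants of an orthonormal basis:
`Ric(X_j,X_k) = −(1/2) Σ_{i<l} ((μ_l − μ_i)² − μ_k μ_j) (C_ki^l/μ_l)(C_ji^l/μ_l)`. -/
theorem ricci_structure_constants_formula_quadratic
    (L : Type) [LieRing L] [LieAlgebra ℝ L] [FiniteDimensional ℝ L]
    (B : L →ₗ[ℝ] L →ₗ[ℝ] ℝ)
    (hBsymm : ∀ u v : L, B u v = B v u)
    (hBnd : ∀ u : L, (∀ v : L, B u v = 0) → u = 0)
    (hBinv : ∀ X Y Z : L, B ⁅X, Y⁆ Z + B Y ⁅X, Z⁆ = 0)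
    (inn : L →ₗ[ℝ] L →ₗ[ℝ] ℝ)
    (hinnsymm : ∀ u v : L, inn u v = inn v u)
    (hinnpos : ∀ v : L, v ≠ 0 → 0 < inn v v)
    (nab : L →ₗ[ℝ] L →ₗ[ℝ] L)
    (hkoszul : ∀ U V W : L, inn (nab U V) W =
      (1/2) * (inn ⁅U, V⁆ W - inn ⁅V, W⁆ U + inn ⁅W, U⁆ V))
    (Ric : L → L → ℝ)
    (hRic : ∀ U V : L, Ric U V = LinearMap.trace ℝ L
      (nab.flip (nab U V) - nab U ∘ₗ nab.flip V
        + nab.flip V ∘ₗ (LieAlgebra.ad ℝ L U : L →ₗ[ℝ] L)))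
    (nn : ℕ) (b : Module.Basis (Fin nn) ℝ L)
    (hortho : ∀ i j : Fin nn, inn (b i) (b j) = if i = j then 1 else 0)
    (lam : Fin nn → ℝ) (hlam : ∀ i, lam i ≠ 0)
    (hBval : ∀ i j : Fin nn, B (b i) (b j) = if i = j then lam i else 0)
    (μ : Fin nn → ℝ) (hμ : ∀ i, μ i = (lam i)⁻¹)
    (C : Fin nn → Fin nn → Fin nn → ℝ)
    (hC : ∀ i j : Fin nn, ⁅b i, b j⁆ = ∑ l, C i j l • b l) :
    ∀ j k : Fin nn,
      Ric (b j) (b k) =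
        -(1/2) * ∑ i : Fin nn, ∑ l : Fin nn,
          if i < l then
            ((μ l - μ i)^2 - μ k * μ j) * (C k i l / μ l) * (C j i l / μ l)
          else 0 :=
  ricci_structure_constants_formula_quadratic_general L B hBinv inn nab hkoszul Ric hRic nn b hortho
    lam hlam hBval μ hμ C hC
end

section
/- Let 𝔤(n) carry the inner product ⟨e_i,e_j⟩ = δ_ij λ_i² with λ_i ≠ 0, and set f_i = e_i/λ_i. Then for X ∈ 𝔤(n), the endomorphism ad X is skew-adjoint with respect to ⟨·,·⟩ (equivalently, X is a left-invariant Killing field of the corresponding left-invariant metric) if and only if X = a(λ_1 f_1 − λ_2 f_2) for some a ∈ ℝ. -/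
/-!
Every element of `𝔤(n)` is `α D + β Z + ∑ₛ (pₛ Xₛ + qₛ Yₛ)`, and `Z` is central. If `ad V` is
skew, then `⟨⁅V, U⁆, Z⟩ = -⟨U, ⁅V, Z⁆⟩ = 0` for all `U`; since `Z ⟂ Xₜ, Yₜ`, pairing
`⁅V, Xₜ⁆ = α aₜ Xₜ - qₜ Z` and `⁅V, Yₜ⁆ = -α aₜ Yₜ + pₜ Z` with `Z` gives `qₜ = pₜ = 0`, and then
pairing `⁅V, X₁⁆ = α a₁ X₁` with `X₁` gives `α = 0`. Hence `V ∈ ℝ Z`, and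
`2 Z = e₁ - e₂ = λ₁ f₁ - λ₂ f₂`. Conversely `ad Z = 0` is skew. The norms of `Z` and `X₁` are
nonzero because `Z ≠ 0` (as `e₁ ≠ e₂`) and `⁅X₁, Y₁⁆ = Z`.
-/

open Finset

theorem LinearMap.surjective_of_basis_mem_range {ι R M N : Type*} [Semiring R]
    [AddCommMonoid M] [Module R M] [AddCommMonoid N] [Module R N]
    (b : Module.Basis ι R M) (φ : N →ₗ[R] M) (h : ∀ i, b i ∈ LinearMap.range φ) :
    Function.Surjective φ := by
  rw [← LinearMap.range_eq_top, eq_top_iff, ← b.span_eq, Submodule.span_le]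
  rintro _ ⟨i, rfl⟩
  exact h i

theorem inn_lie_eq_zero_of_lie_eq_zero {R L : Type*} [CommRing R] [LieRing L] [LieAlgebra R L]
    {inn : L →ₗ[R] L →ₗ[R] R} {V Z : L} (hV : ∀ U W, inn ⁅V, U⁆ W + inn U ⁅V, W⁆ = 0)
    (hVZ : ⁅V, Z⁆ = 0) (U : L) : inn ⁅V, U⁆ Z = 0 := by
  simpa [hVZ] using hV U Z

section Frame

variable {R L : Type*} [CommRing R] [LieRing L] [LieAlgebra R L]
  {n : ℕ} {a : ℕ → R} {D Z : L} {X Y : ℕ → L}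

/-- The structure constants of `𝔤(n)` in the frame `D, X₁, …, Xₙ, Y₁, …, Yₙ, Z`. -/
structure IsGnFrame (n : ℕ) (a : ℕ → R) (D Z : L) (X Y : ℕ → L) : Prop where
  lie_D_X : ∀ s, 1 ≤ s → s ≤ n → ⁅D, X s⁆ = a s • X s
  lie_D_Y : ∀ s, 1 ≤ s → s ≤ n → ⁅D, Y s⁆ = (-(a s)) • Y s
  lie_X_Y_self : ∀ s, 1 ≤ s → s ≤ n → ⁅X s, Y s⁆ = Z
  lie_D_Z : ⁅D, Z⁆ = 0
  lie_X_Z : ∀ s, 1 ≤ s → s ≤ n → ⁅X s, Z⁆ = 0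
  lie_Y_Z : ∀ s, 1 ≤ s → s ≤ n → ⁅Y s, Z⁆ = 0
  lie_X_X : ∀ s t, 1 ≤ s → s ≤ n → 1 ≤ t → t ≤ n → ⁅X s, X t⁆ = 0
  lie_Y_Y : ∀ s t, 1 ≤ s → s ≤ n → 1 ≤ t → t ≤ n → ⁅Y s, Y t⁆ = 0
  lie_X_Y_of_ne : ∀ s t, 1 ≤ s → s ≤ n → 1 ≤ t → t ≤ n → s ≠ t → ⁅X s, Y t⁆ = 0

variable (R n D Z X Y) in
def frameCombination : R × R × (ℕ → R) × (ℕ → R) →ₗ[R] L where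
  toFun v := v.1 • D + v.2.1 • Z + ∑ s ∈ Icc 1 n, (v.2.2.1 s • X s + v.2.2.2 s • Y s)
  map_add' v w := by
    simp only [Prod.fst_add, Prod.snd_add, Pi.add_apply, add_smul, sum_add_distrib]
    abel
  map_smul' c v := by
    simp only [Prod.smul_fst, Prod.smul_snd, Pi.smul_apply, smul_eq_mul, mul_smul,
      RingHom.id_apply, smul_add, smul_sum]

theorem frameCombination_apply (α β : R) (p q : ℕ → R) :
    frameCombination R n D Z X Y (α, β, p, q) =
      α • D + β • Z + ∑ s ∈ Icc 1 n, (p s • X s + q s • Y s) := rfl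

theorem frameCombination_single {s : ℕ} (hs1 : 1 ≤ s) (hs2 : s ≤ n) (c d : R) :
    frameCombination R n D Z X Y (0, 0, Pi.single s c, Pi.single s d) = c • X s + d • Y s := by
  rw [frameCombination_apply, sum_eq_single_of_mem s (mem_Icc.mpr ⟨hs1, hs2⟩)]
  · simp
  · intro t _ hts
    simp [hts]

theorem frameCombination_surjective {ι : Type*} (b : Module.Basis ι R L) (e : ℕ → L)
    (c : ℕ → R) (hbe : ∀ i, ∃ m, 1 ≤ m ∧ m ≤ 2 * n + 2 ∧ b i = e m)
    (he1 : e 1 = D + Z) (he2 : e 2 = D - Z)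
    (heodd : ∀ s, 1 ≤ s → s ≤ n → e (2 * s + 1) = c s • (X s + Y s))
    (heeven : ∀ s, 1 ≤ s → s ≤ n → e (2 * s + 2) = c s • (X s - Y s)) :
    Function.Surjective (frameCombination R n D Z X Y) := by
  refine LinearMap.surjective_of_basis_mem_range b _ fun i => ?_
  obtain ⟨m, hm1, hm2, hbm⟩ := hbe i
  rw [hbm]
  obtain rfl | rfl | ⟨s, hs1, hs2, rfl | rfl⟩ :
      m = 1 ∨ m = 2 ∨ ∃ s, 1 ≤ s ∧ s ≤ n ∧ (m = 2 * s + 1 ∨ m = 2 * s + 2) := by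
    by_cases hm : m ≤ 2
    · omega
    · exact Or.inr (Or.inr ⟨(m - 1) / 2, by omega, by omega, by omega⟩)
  · exact ⟨(1, 1, 0, 0), by simp [frameCombination_apply, he1]⟩
  · exact ⟨(1, -1, 0, 0), by simp [frameCombination_apply, he2, sub_eq_add_neg]⟩
  · exact ⟨_, (frameCombination_single hs1 hs2 (c s) (c s)).trans
      (by rw [heodd s hs1 hs2, smul_add])⟩
  · exact ⟨_, (frameCombination_single hs1 hs2 (c s) (-c s)).trans
      (by rw [heeven s hs1 hs2, smul_sub, neg_smul, sub_eq_add_neg])⟩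

namespace IsGnFrame

theorem frameCombination_lie_Z (hg : IsGnFrame n a D Z X Y) (v : R × R × (ℕ → R) × (ℕ → R)) :
    ⁅frameCombination R n D Z X Y v, Z⁆ = 0 := by
  obtain ⟨α, β, p, q⟩ := v
  rw [frameCombination_apply, add_lie, add_lie, sum_lie, smul_lie, smul_lie, hg.lie_D_Z,
    lie_self, sum_eq_zero]
  · simp
  · intro s hs
    obtain ⟨hs1, hs2⟩ := mem_Icc.mp hs
    simp [hg.lie_X_Z s hs1 hs2, hg.lie_Y_Z s hs1 hs2]

theorem frameCombination_lie_X (hg : IsGnFrame n a D Z X Y) (α β : R) (p q : ℕ → R) {t : ℕ}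
    (ht1 : 1 ≤ t) (ht2 : t ≤ n) :
    ⁅frameCombination R n D Z X Y (α, β, p, q), X t⁆ = (α * a t) • X t - q t • Z := by
  rw [frameCombination_apply, add_lie, add_lie, sum_lie, smul_lie, smul_lie, hg.lie_D_X t ht1 ht2,
    ← lie_skew Z, hg.lie_X_Z t ht1 ht2, sum_eq_single_of_mem t (mem_Icc.mpr ⟨ht1, ht2⟩)]
  · rw [add_lie, smul_lie, smul_lie, hg.lie_X_X t t ht1 ht2 ht1 ht2, ← lie_skew (Y t),
      hg.lie_X_Y_self t ht1 ht2]
    simp [mul_smul, sub_eq_add_neg]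
  · intro s hs hst
    obtain ⟨hs1, hs2⟩ := mem_Icc.mp hs
    rw [add_lie, smul_lie, smul_lie, hg.lie_X_X s t hs1 hs2 ht1 ht2, ← lie_skew (Y s),
      hg.lie_X_Y_of_ne t s ht1 ht2 hs1 hs2 (Ne.symm hst)]
    simp

theorem frameCombination_lie_Y (hg : IsGnFrame n a D Z X Y) (α β : R) (p q : ℕ → R) {t : ℕ}
    (ht1 : 1 ≤ t) (ht2 : t ≤ n) :
    ⁅frameCombination R n D Z X Y (α, β, p, q), Y t⁆ = (-(α * a t)) • Y t + p t • Z := by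
  rw [frameCombination_apply, add_lie, add_lie, sum_lie, smul_lie, smul_lie, hg.lie_D_Y t ht1 ht2,
    ← lie_skew Z, hg.lie_Y_Z t ht1 ht2, sum_eq_single_of_mem t (mem_Icc.mpr ⟨ht1, ht2⟩)]
  · rw [add_lie, smul_lie, smul_lie, hg.lie_Y_Y t t ht1 ht2 ht1 ht2, hg.lie_X_Y_self t ht1 ht2]
    simp [mul_smul]
  · intro s hs hst
    obtain ⟨hs1, hs2⟩ := mem_Icc.mp hs
    rw [add_lie, smul_lie, smul_lie, hg.lie_Y_Y s t hs1 hs2 ht1 ht2,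
      hg.lie_X_Y_of_ne s t hs1 hs2 ht1 ht2 hst]
    simp

end IsGnFrame

end Frame

section Skew

variable {K L : Type*} [Field K] [CharZero K] [LieRing L] [LieAlgebra K L]
  {inn : L →ₗ[K] L →ₗ[K] K}

theorem inn_X_Z_eq_zero_and_inn_Y_Z_eq_zero {D Z : L} {X Y : ℕ → L} {e : ℕ → L} {t : ℕ} {c : K}
    (hc : c ≠ 0) (he1 : e 1 = D + Z) (he2 : e 2 = D - Z)
    (heodd : e (2 * t + 1) = c • (X t + Y t)) (heeven : e (2 * t + 2) = c • (X t - Y t))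
    (horth : ∀ i j, (i = 2 * t + 1 ∨ i = 2 * t + 2) → (j = 1 ∨ j = 2) → inn (e i) (e j) = 0) :
    inn (X t) Z = 0 ∧ inn (Y t) Z = 0 := by
  have hZ : (2 : K) • Z = e 1 - e 2 := by rw [he1, he2]; module
  have hX : (2 * c) • X t = e (2 * t + 1) + e (2 * t + 2) := by rw [heodd, heeven]; module
  have hY : (2 * c) • Y t = e (2 * t + 1) - e (2 * t + 2) := by rw [heodd, heeven]; module
  have h11 := horth _ 1 (.inl rfl) (.inl rfl)
  have h12 := horth _ 2 (.inl rfl) (.inr rfl)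
  have h21 := horth _ 1 (.inr rfl) (.inl rfl)
  have h22 := horth _ 2 (.inr rfl) (.inr rfl)
  have hXZ : inn ((2 * c) • X t) ((2 : K) • Z) = 0 := by
    simp only [hX, hZ, map_add, map_sub, LinearMap.add_apply, h11, h12, h21, h22]
    ring
  have hYZ : inn ((2 * c) • Y t) ((2 : K) • Z) = 0 := by
    simp only [hY, hZ, map_sub, LinearMap.sub_apply, h11, h12, h21, h22]
    ring
  simp only [map_smul, LinearMap.smul_apply, smul_eq_mul] at hXZ hYZ
  exact ⟨by simpa [hc] using hXZ, by simpa [hc] using hYZ⟩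

variable {n : ℕ} {a : ℕ → K} {D Z : L} {X Y : ℕ → L}

theorem IsGnFrame.frameCombination_eq_smul_of_skew (hg : IsGnFrame n a D Z X Y) (hn : 1 ≤ n)
    (ha : a 1 ≠ 0) (hZZ : inn Z Z ≠ 0) (hXX : inn (X 1) (X 1) ≠ 0)
    (hperpZ : ∀ t, 1 ≤ t → t ≤ n → inn (X t) Z = 0 ∧ inn (Y t) Z = 0)
    {α β : K} {p q : ℕ → K}
    (hskew : ∀ U W, inn ⁅frameCombination K n D Z X Y (α, β, p, q), U⁆ W +
      inn U ⁅frameCombination K n D Z X Y (α, β, p, q), W⁆ = 0) :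
    frameCombination K n D Z X Y (α, β, p, q) = β • Z := by
  have hperp := inn_lie_eq_zero_of_lie_eq_zero hskew (hg.frameCombination_lie_Z _)
  have hq : ∀ t, 1 ≤ t → t ≤ n → q t = 0 := by
    intro t ht1 ht2
    simpa [hg.frameCombination_lie_X α β p q ht1 ht2, (hperpZ t ht1 ht2).1, hZZ] using hperp (X t)
  have hp : ∀ t, 1 ≤ t → t ≤ n → p t = 0 := by
    intro t ht1 ht2
    simpa [hg.frameCombination_lie_Y α β p q ht1 ht2, (hperpZ t ht1 ht2).2, hZZ] using hperp (Y t)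
  have hα : α = 0 := by
    simpa [hg.frameCombination_lie_X α β p q le_rfl hn, hq 1 le_rfl hn, ha, hXX] using
      hskew (X 1) (X 1)
  rw [frameCombination_apply, hα, sum_eq_zero]
  · simp
  · intro s hs
    obtain ⟨hs1, hs2⟩ := mem_Icc.mp hs
    simp [hp s hs1 hs2, hq s hs1 hs2]

end Skew

theorem gn_killing_fields_general
    (n : ℕ) (hn : 1 ≤ n)
    (a : ℕ → ℝ)
    (hapos : ∀ s, 1 ≤ s → s ≤ n → 0 < a s)
    (L : Type) [LieRing L] [LieAlgebra ℝ L]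
    (D Z : L) (X Y : ℕ → L)
    (hDX : ∀ s, 1 ≤ s → s ≤ n → ⁅D, X s⁆ = a s • X s)
    (hDY : ∀ s, 1 ≤ s → s ≤ n → ⁅D, Y s⁆ = (-(a s)) • Y s)
    (hXYs : ∀ s, 1 ≤ s → s ≤ n → ⁅X s, Y s⁆ = Z)
    (hDZ : ⁅D, Z⁆ = 0)
    (hXZ : ∀ s, 1 ≤ s → s ≤ n → ⁅X s, Z⁆ = 0)
    (hYZ : ∀ s, 1 ≤ s → s ≤ n → ⁅Y s, Z⁆ = 0)
    (hXX : ∀ s t, 1 ≤ s → s ≤ n → 1 ≤ t → t ≤ n → ⁅X s, X t⁆ = 0)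
    (hYY : ∀ s t, 1 ≤ s → s ≤ n → 1 ≤ t → t ≤ n → ⁅Y s, Y t⁆ = 0)
    (hXYd : ∀ s t, 1 ≤ s → s ≤ n → 1 ≤ t → t ≤ n → s ≠ t → ⁅X s, Y t⁆ = 0)
    (e : ℕ → L)
    (he1 : e 1 = D + Z) (he2 : e 2 = D - Z)
    (heodd : ∀ s, 1 ≤ s → s ≤ n → e (2*s+1) = Real.sqrt (a s) • (X s + Y s))
    (heeven : ∀ s, 1 ≤ s → s ≤ n → e (2*s+2) = Real.sqrt (a s) • (X s - Y s))
    (b : Module.Basis (Fin (2*n+2)) ℝ L)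
    (hb : ∀ i : Fin (2*n+2), b i = e ((i : ℕ) + 1))
    (lam : ℕ → ℝ) (hlam : ∀ i, 1 ≤ i → i ≤ 2*n+2 → lam i ≠ 0)
    (inn : L →ₗ[ℝ] L →ₗ[ℝ] ℝ)
    (hinnpos : ∀ v : L, v ≠ 0 → 0 < inn v v)
    (hinne : ∀ i j, 1 ≤ i → i ≤ 2*n+2 → 1 ≤ j → j ≤ 2*n+2 →
      inn (e i) (e j) = if i = j then (lam i)^2 else 0)
    (f : ℕ → L) (hf : ∀ i, f i = (lam i)⁻¹ • e i)
    :
    ∀ V : L,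
      (∀ U W : L, inn ⁅V, U⁆ W + inn U ⁅V, W⁆ = 0) ↔
      (∃ c : ℝ, V = c • (lam 1 • f 1 - lam 2 • f 2)) := by
  have hg : IsGnFrame n a D Z X Y := ⟨hDX, hDY, hXYs, hDZ, hXZ, hYZ, hXX, hYY, hXYd⟩
  have hsurj := frameCombination_surjective b e (fun s => √(a s))
    (fun i => ⟨i + 1, by omega, by omega, hb i⟩) he1 he2 heodd heeven
  have hcentral (U : L) : ⁅Z, U⁆ = 0 := by
    obtain ⟨v, rfl⟩ := hsurj U
    rw [← lie_skew, hg.frameCombination_lie_Z v, neg_zero]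
  have hZf : (2 : ℝ) • Z = lam 1 • f 1 - lam 2 • f 2 := by
    rw [hf, hf, smul_smul, smul_smul, mul_inv_cancel₀ (hlam 1 le_rfl (by omega)),
      mul_inv_cancel₀ (hlam 2 (by omega) (by omega)), one_smul, one_smul, he1, he2]
    module
  have hZ0 : Z ≠ 0 := by
    rintro rfl
    have h01 : b ⟨0, by omega⟩ = b ⟨1, by omega⟩ := by simp [hb, he1, he2]
    exact absurd (b.injective h01) (by simp)
  have hX0 : X 1 ≠ 0 := fun h => hZ0 (by rw [← hXYs 1 le_rfl hn, h, zero_lie])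
  have horth (t : ℕ) (ht1 : 1 ≤ t) (ht2 : t ≤ n) :=
    inn_X_Z_eq_zero_and_inn_Y_Z_eq_zero (Real.sqrt_pos.mpr (hapos t ht1 ht2)).ne' he1 he2
      (heodd t ht1 ht2) (heeven t ht1 ht2) fun i j hi hj => by
        rw [hinne i j (by omega) (by omega) (by omega) (by omega), if_neg (by omega)]
  intro V
  constructor
  · intro hV
    obtain ⟨⟨α, β, p, q⟩, rfl⟩ := hsurj V
    refine ⟨β / 2, ?_⟩
    rw [hg.frameCombination_eq_smul_of_skew hn (hapos 1 le_rfl hn).ne' (hinnpos Z hZ0).ne'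
      (hinnpos _ hX0).ne' horth hV, ← hZf, smul_smul]
    norm_num
  · rintro ⟨c, rfl⟩ U W
    simp [← hZf, hcentral]

/-- On 𝔤(n) with the metric ⟨e_i,e_j⟩ = δ_ij λ_i², a vector X is a Killing
field (ad X skew-adjoint) iff X = a(λ₁f₁ − λ₂f₂) for some a ∈ ℝ. -/
theorem gn_killing_fields
    (n : ℕ) (hn : 1 ≤ n)
    (a : ℕ → ℝ)
    (hapos : ∀ s, 1 ≤ s → s ≤ n → 0 < a s)
    (hamono : ∀ s t, 1 ≤ s → s ≤ t → t ≤ n → a s ≤ a t)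
    (L : Type) [LieRing L] [LieAlgebra ℝ L] [FiniteDimensional ℝ L]
    (D Z : L) (X Y : ℕ → L)
    (hDX : ∀ s, 1 ≤ s → s ≤ n → ⁅D, X s⁆ = a s • X s)
    (hDY : ∀ s, 1 ≤ s → s ≤ n → ⁅D, Y s⁆ = (-(a s)) • Y s)
    (hXYs : ∀ s, 1 ≤ s → s ≤ n → ⁅X s, Y s⁆ = Z)
    (hDZ : ⁅D, Z⁆ = 0)
    (hXZ : ∀ s, 1 ≤ s → s ≤ n → ⁅X s, Z⁆ = 0)
    (hYZ : ∀ s, 1 ≤ s → s ≤ n → ⁅Y s, Z⁆ = 0)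
    (hXX : ∀ s t, 1 ≤ s → s ≤ n → 1 ≤ t → t ≤ n → ⁅X s, X t⁆ = 0)
    (hYY : ∀ s t, 1 ≤ s → s ≤ n → 1 ≤ t → t ≤ n → ⁅Y s, Y t⁆ = 0)
    (hXYd : ∀ s t, 1 ≤ s → s ≤ n → 1 ≤ t → t ≤ n → s ≠ t → ⁅X s, Y t⁆ = 0)
    (e : ℕ → L)
    (he1 : e 1 = D + Z) (he2 : e 2 = D - Z)
    (heodd : ∀ s, 1 ≤ s → s ≤ n → e (2*s+1) = Real.sqrt (a s) • (X s + Y s))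
    (heeven : ∀ s, 1 ≤ s → s ≤ n → e (2*s+2) = Real.sqrt (a s) • (X s - Y s))
    (b : Module.Basis (Fin (2*n+2)) ℝ L)
    (hb : ∀ i : Fin (2*n+2), b i = e ((i : ℕ) + 1))
    (lam : ℕ → ℝ) (hlam : ∀ i, 1 ≤ i → i ≤ 2*n+2 → lam i ≠ 0)
    (inn : L →ₗ[ℝ] L →ₗ[ℝ] ℝ)
    (hinnsymm : ∀ u v : L, inn u v = inn v u)
    (hinnpos : ∀ v : L, v ≠ 0 → 0 < inn v v)
    (hinne : ∀ i j, 1 ≤ i → i ≤ 2*n+2 → 1 ≤ j → j ≤ 2*n+2 →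
      inn (e i) (e j) = if i = j then (lam i)^2 else 0)
    (f : ℕ → L) (hf : ∀ i, f i = (lam i)⁻¹ • e i)
    :
    ∀ V : L,
      (∀ U W : L, inn ⁅V, U⁆ W + inn U ⁅V, W⁆ = 0) ↔
      (∃ c : ℝ, V = c • (lam 1 • f 1 - lam 2 • f 2)) :=
  gn_killing_fields_general n hn a hapos L D Z X Y hDX hDY hXYs hDZ hXZ hYZ hXX hYY hXYd e he1 he2
    heodd heeven b hb lam hlam inn hinnpos hinne f hf
end

section
/- Let 𝔤(n) carry the inner product ⟨e_i,e_j⟩ = δ_ij λ_i² (λ_i ≠ 0), f_i = e_i/λ_i, and let Ric be the algebraically defined Ricci tensor of the Koszul connection. Then Ric(f_i, f_j) = 0 for all i ≠ j with {i,j} ≠ {1,2}. -/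
/-!
An isometric Lie algebra automorphism `φ` preserves the Koszul connection, hence the Ricci
tensor: `Ric (φ u) (φ v) = Ric u v`. On `𝔤(n)` the diagonal maps `e k ↦ ε k • e k` with signs
`ε 2 = ε 1` and `ε (2s+2) = ε 1 * ε (2s+1)` are Lie automorphisms, and isometries because the
`e k` are orthogonal. Since `f k` is a multiple of `e k`, this gives
`Ric (f i) (f j) = ε i * ε j * Ric (f i) (f j)`, and for `i ≠ j` with `{i, j} ≠ {1, 2}` one of
these sign patterns has `ε i * ε j = -1`.
-/

section Koszul

variable {L : Type*} [LieRing L] [LieAlgebra ℝ L]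

lemma eq_of_forall_apply_eq_of_pos_s11 {M : Type*} [AddCommGroup M] [Module ℝ M]
    (B : M →ₗ[ℝ] M →ₗ[ℝ] ℝ) (hB : ∀ v, v ≠ 0 → 0 < B v v) {x y : M}
    (h : ∀ w, B x w = B y w) : x = y := by
  by_contra hxy
  have hpos := hB (x - y) (sub_ne_zero.mpr hxy)
  simp only [map_sub, LinearMap.sub_apply, h, sub_self, lt_self_iff_false] at hpos

/-- The endomorphism `W ↦ ∇_W ∇_U V - ∇_U ∇_W V - ∇_{[W,U]} V`, whose trace is `Ric(U, V)`. -/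
def ricciOperator (nab : L →ₗ[ℝ] L →ₗ[ℝ] L) (U V : L) : Module.End ℝ L :=
  nab.flip (nab U V) - nab U ∘ₗ nab.flip V + nab.flip V ∘ₗ (LieAlgebra.ad ℝ L U : L →ₗ[ℝ] L)

lemma ricciOperator_smul_smul (nab : L →ₗ[ℝ] L →ₗ[ℝ] L) (r t : ℝ) (U V : L) :
    ricciOperator nab (r • U) (t • V) = (r * t) • ricciOperator nab U V := by
  ext W
  simp only [ricciOperator, LinearMap.add_apply, LinearMap.sub_apply, LinearMap.coe_comp,
    Function.comp_apply, LinearMap.flip_apply, LieAlgebra.ad_apply, LinearMap.smul_apply,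
    map_smul, smul_sub, smul_add, smul_smul]
  module

lemma koszul_map_map (inn : L →ₗ[ℝ] L →ₗ[ℝ] ℝ) (hpos : ∀ v, v ≠ 0 → 0 < inn v v)
    (nab : L →ₗ[ℝ] L →ₗ[ℝ] L)
    (hkoszul : ∀ U V W : L, inn (nab U V) W =
      (1/2) * (inn ⁅U, V⁆ W - inn ⁅V, W⁆ U + inn ⁅W, U⁆ V))
    (φ : L ≃ₗ[ℝ] L) (hlie : ∀ u v, ⁅φ u, φ v⁆ = φ ⁅u, v⁆)
    (hiso : ∀ u v, inn (φ u) (φ v) = inn u v) (u v : L) :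
    nab (φ u) (φ v) = φ (nab u v) := by
  refine eq_of_forall_apply_eq_of_pos_s11 inn hpos fun w => ?_
  obtain ⟨w, rfl⟩ := φ.surjective w
  simp only [hkoszul, hlie, hiso]

lemma ricciOperator_map_map (nab : L →ₗ[ℝ] L →ₗ[ℝ] L) (φ : L ≃ₗ[ℝ] L)
    (hlie : ∀ u v, ⁅φ u, φ v⁆ = φ ⁅u, v⁆) (hnab : ∀ u v, nab (φ u) (φ v) = φ (nab u v))
    (u v : L) : ricciOperator nab (φ u) (φ v) = φ.conj (ricciOperator nab u v) := by
  ext w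
  obtain ⟨w, rfl⟩ := φ.surjective w
  simp only [ricciOperator, LinearEquiv.conj_apply, LinearMap.add_apply, LinearMap.sub_apply,
    LinearMap.coe_comp, Function.comp_apply, LinearMap.flip_apply, LieAlgebra.ad_apply,
    LinearEquiv.coe_coe,    LinearEquiv.symm_apply_apply, hnab, hlie, map_add, map_sub]

lemma trace_ricciOperator_eq_zero_of_eigen (inn : L →ₗ[ℝ] L →ₗ[ℝ] ℝ)
    (hpos : ∀ v, v ≠ 0 → 0 < inn v v) (nab : L →ₗ[ℝ] L →ₗ[ℝ] L)
    (hkoszul : ∀ U V W : L, inn (nab U V) W =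
      (1/2) * (inn ⁅U, V⁆ W - inn ⁅V, W⁆ U + inn ⁅W, U⁆ V))
    (φ : L ≃ₗ[ℝ] L) (hlie : ∀ u v, ⁅φ u, φ v⁆ = φ ⁅u, v⁆)
    (hiso : ∀ u v, inn (φ u) (φ v) = inn u v) {u v : L} {r t : ℝ}
    (hu : φ u = r • u) (hv : φ v = t • v) (hrt : r * t = -1) :
    LinearMap.trace ℝ L (ricciOperator nab u v) = 0 := by
  have h := congrArg (LinearMap.trace ℝ L)
    (ricciOperator_map_map nab φ hlie (koszul_map_map inn hpos nab hkoszul φ hlie hiso) u v)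
  rw [LinearMap.trace_conj', hu, hv, ricciOperator_smul_smul, map_smul, hrt, smul_eq_mul] at h
  linarith

end Koszul

namespace Module.Basis

variable {ι R M N : Type*} [CommRing R] [AddCommGroup M] [Module R M] [AddCommGroup N]
  [Module R N]

lemma apply_map_map_of_orthogonal (b : Basis ι R M) (B : M →ₗ[R] M →ₗ[R] N)
    (hB : ∀ i j, i ≠ j → B (b i) (b j) = 0) (φ : M →ₗ[R] M) (w : ι → R)
    (hw : ∀ i, w i * w i = 1) (hφ : ∀ i, φ (b i) = w i • b i) (u v : M) :
    B (φ u) (φ v) = B u v := by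
  refine LinearMap.congr_fun₂ (LinearMap.ext_basis b b (B := B.compl₁₂ φ φ) fun i j => ?_) u v
  rw [LinearMap.compl₁₂_apply, hφ, hφ, map_smul, map_smul, LinearMap.smul_apply]
  obtain rfl | hij := eq_or_ne i j
  · rw [smul_smul, hw, one_smul]
  · rw [hB i j hij, smul_zero, smul_zero]

lemma map_lie_of_eigen {L : Type*} [LieRing L] [LieAlgebra R L] (b : Basis ι R L)
    (φ : L →ₗ[R] L) (w : ι → R) (hφ : ∀ i, φ (b i) = w i • b i)
    (h : ∀ i j, φ ⁅b i, b j⁆ = (w i * w j) • ⁅b i, b j⁆) (u v : L) :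
    ⁅φ u, φ v⁆ = φ ⁅u, v⁆ := by
  let bracket : L →ₗ[R] L →ₗ[R] L := (LieAlgebra.ad R L : L →ₗ[R] Module.End R L)
  refine LinearMap.congr_fun₂
    (LinearMap.ext_basis b b (B := bracket.compl₁₂ φ φ) (B' := bracket.compr₂ φ) fun i j => ?_) u v
  simp only [LinearMap.compl₁₂_apply, LinearMap.compr₂_apply, bracket, LieHom.coe_toLinearMap,
    LieAlgebra.ad_apply, hφ, h, smul_lie, lie_smul, smul_smul, mul_comm]

end Module.Basis

structure IsGnFrame_s11 {L : Type*} [LieRing L] [LieAlgebra ℝ L] (n : ℕ) (a : ℕ → ℝ) (D Z : L)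
    (X Y e : ℕ → L) : Prop where
  pos : ∀ s, 1 ≤ s → s ≤ n → 0 < a s
  lie_D_X : ∀ s, 1 ≤ s → s ≤ n → ⁅D, X s⁆ = a s • X s
  lie_D_Y : ∀ s, 1 ≤ s → s ≤ n → ⁅D, Y s⁆ = (-(a s)) • Y s
  lie_X_Y_self : ∀ s, 1 ≤ s → s ≤ n → ⁅X s, Y s⁆ = Z
  lie_D_Z : ⁅D, Z⁆ = 0
  lie_X_Z : ∀ s, 1 ≤ s → s ≤ n → ⁅X s, Z⁆ = 0
  lie_Y_Z : ∀ s, 1 ≤ s → s ≤ n → ⁅Y s, Z⁆ = 0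
  lie_X_X : ∀ s t, 1 ≤ s → s ≤ n → 1 ≤ t → t ≤ n → ⁅X s, X t⁆ = 0
  lie_Y_Y : ∀ s t, 1 ≤ s → s ≤ n → 1 ≤ t → t ≤ n → ⁅Y s, Y t⁆ = 0
  lie_X_Y_of_ne : ∀ s t, 1 ≤ s → s ≤ n → 1 ≤ t → t ≤ n → s ≠ t → ⁅X s, Y t⁆ = 0
  e_one : e 1 = D + Z
  e_two : e 2 = D - Z
  e_odd : ∀ s, 1 ≤ s → s ≤ n → e (2*s+1) = Real.sqrt (a s) • (X s + Y s)
  e_even : ∀ s, 1 ≤ s → s ≤ n → e (2*s+2) = Real.sqrt (a s) • (X s - Y s)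

/-- Sign patterns `ε` for which `e k ↦ ε k • e k` is a Lie algebra automorphism of `𝔤(n)`. -/
structure IsGnSign (n : ℕ) (ε : ℕ → ℝ) : Prop where
  mul_self : ∀ k, ε k * ε k = 1
  two : ε 2 = ε 1
  even : ∀ s, 1 ≤ s → s ≤ n → ε (2*s+2) = ε 1 * ε (2*s+1)

lemma gn_index_cases {n k : ℕ} (hk₁ : 1 ≤ k) (hk₂ : k ≤ 2*n+2) :
    (k = 1 ∨ k = 2) ∨ ∃ s i, 1 ≤ s ∧ s ≤ n ∧ (i = 1 ∨ i = 2) ∧ k = 2*s+i := by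
  by_cases hk : k ≤ 2
  · omega
  · exact Or.inr ⟨(k - 1) / 2, k - 2 * ((k - 1) / 2), by omega, by omega, by omega, by omega⟩

namespace IsGnFrame_s11

variable {L : Type*} [LieRing L] [LieAlgebra ℝ L] {n : ℕ} {a : ℕ → ℝ} {D Z : L} {X Y e : ℕ → L}

lemma lie_low_low (h : IsGnFrame_s11 n a D Z X Y e) {c d : ℕ} (hc : c = 1 ∨ c = 2)
    (hd : d = 1 ∨ d = 2) : ⁅e c, e d⁆ = 0 := by
  have hZD : ⁅Z, D⁆ = 0 := by rw [← lie_skew, h.lie_D_Z, neg_zero]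
  rcases hc with rfl | rfl <;> rcases hd with rfl | rfl <;>
    simp only [h.e_one, h.e_two, add_lie, sub_lie, lie_add, lie_sub, lie_self, h.lie_D_Z, hZD] <;>
    abel

lemma lie_low_odd (h : IsGnFrame_s11 n a D Z X Y e) {c t : ℕ} (hc : c = 1 ∨ c = 2) (ht₁ : 1 ≤ t)
    (ht₂ : t ≤ n) : ⁅e c, e (2*t+1)⁆ = a t • e (2*t+2) := by
  have hZX : ⁅Z, X t⁆ = 0 := by rw [← lie_skew, h.lie_X_Z t ht₁ ht₂, neg_zero]
  have hZY : ⁅Z, Y t⁆ = 0 := by rw [← lie_skew, h.lie_Y_Z t ht₁ ht₂, neg_zero]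
  rcases hc with rfl | rfl <;>
    simp only [h.e_one, h.e_two, h.e_odd t ht₁ ht₂, h.e_even t ht₁ ht₂, add_lie, sub_lie,
      lie_add, lie_smul, h.lie_D_X t ht₁ ht₂, h.lie_D_Y t ht₁ ht₂, hZX, hZY] <;>
    module

lemma lie_low_even (h : IsGnFrame_s11 n a D Z X Y e) {c t : ℕ} (hc : c = 1 ∨ c = 2) (ht₁ : 1 ≤ t)
    (ht₂ : t ≤ n) : ⁅e c, e (2*t+2)⁆ = a t • e (2*t+1) := by
  have hZX : ⁅Z, X t⁆ = 0 := by rw [← lie_skew, h.lie_X_Z t ht₁ ht₂, neg_zero]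
  have hZY : ⁅Z, Y t⁆ = 0 := by rw [← lie_skew, h.lie_Y_Z t ht₁ ht₂, neg_zero]
  rcases hc with rfl | rfl <;>
    simp only [h.e_one, h.e_two, h.e_odd t ht₁ ht₂, h.e_even t ht₁ ht₂, add_lie, sub_lie,
      lie_sub, lie_smul, h.lie_D_X t ht₁ ht₂, h.lie_D_Y t ht₁ ht₂, hZX, hZY] <;>
    module

lemma lie_block_of_ne (h : IsGnFrame_s11 n a D Z X Y e) {s t i j : ℕ} (hs₁ : 1 ≤ s) (hs₂ : s ≤ n)
    (ht₁ : 1 ≤ t) (ht₂ : t ≤ n) (hst : s ≠ t) (hi : i = 1 ∨ i = 2) (hj : j = 1 ∨ j = 2) :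
    ⁅e (2*s+i), e (2*t+j)⁆ = 0 := by
  have hYX : ⁅Y s, X t⁆ = 0 := by
    rw [← lie_skew, h.lie_X_Y_of_ne t s ht₁ ht₂ hs₁ hs₂ hst.symm, neg_zero]
  rcases hi with rfl | rfl <;> rcases hj with rfl | rfl <;>
    simp only [h.e_odd s hs₁ hs₂, h.e_odd t ht₁ ht₂, h.e_even s hs₁ hs₂, h.e_even t ht₁ ht₂,
      smul_lie, lie_smul, add_lie, sub_lie, lie_add, lie_sub, h.lie_X_X s t hs₁ hs₂ ht₁ ht₂,
      h.lie_Y_Y s t hs₁ hs₂ ht₁ ht₂, h.lie_X_Y_of_ne s t hs₁ hs₂ ht₁ ht₂ hst, hYX] <;>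
    simp

lemma lie_odd_even_self (h : IsGnFrame_s11 n a D Z X Y e) {s : ℕ} (hs₁ : 1 ≤ s) (hs₂ : s ≤ n) :
    ⁅e (2*s+1), e (2*s+2)⁆ = a s • (e 2 - e 1) := by
  have hYX : ⁅Y s, X s⁆ = -Z := by rw [← lie_skew, h.lie_X_Y_self s hs₁ hs₂]
  rw [h.e_odd s hs₁ hs₂, h.e_even s hs₁ hs₂, smul_lie, lie_smul, add_lie, lie_sub, lie_sub,
    lie_self, lie_self, h.lie_X_Y_self s hs₁ hs₂, hYX, smul_smul,
    Real.mul_self_sqrt (h.pos s hs₁ hs₂).le, h.e_one, h.e_two]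
  module

lemma map_lie_eq_smul (h : IsGnFrame_s11 n a D Z X Y e) {ε : ℕ → ℝ} (hε : IsGnSign n ε)
    (φ : L →ₗ[ℝ] L) (hφ : ∀ k, 1 ≤ k → k ≤ 2*n+2 → φ (e k) = ε k • e k) {k l : ℕ}
    (hk₁ : 1 ≤ k) (hk₂ : k ≤ 2*n+2) (hl₁ : 1 ≤ l) (hl₂ : l ≤ 2*n+2) :
    φ ⁅e k, e l⁆ = (ε k * ε l) • ⁅e k, e l⁆ := by
  wlog hkl : k < l generalizing k l
  · obtain rfl | hlk := eq_or_lt_of_le (not_lt.mp hkl)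
    · rw [lie_self, map_zero, smul_zero]
    · rw [← lie_skew, map_neg, this hl₁ hl₂ hk₁ hk₂ hlk, mul_comm, smul_neg]
  rcases gn_index_cases hk₁ hk₂ with hc | ⟨s, i, hs₁, hs₂, hi, rfl⟩ <;>
    rcases gn_index_cases hl₁ hl₂ with hd | ⟨t, j, ht₁, ht₂, hj, rfl⟩
  · rw [h.lie_low_low hc hd, map_zero, smul_zero]
  · have hεk : ε k = ε 1 := by rcases hc with rfl | rfl <;> simp [hε.two]
    rcases hj with rfl | rfl
    · rw [h.lie_low_odd hc ht₁ ht₂, map_smul, hφ _ (by omega) (by omega), hε.even t ht₁ ht₂, hεk,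
        smul_comm]
    · rw [h.lie_low_even hc ht₁ ht₂, map_smul, hφ _ (by omega) (by omega), hε.even t ht₁ ht₂, hεk,
        ← mul_assoc, hε.mul_self, one_mul, smul_comm]
  · omega
  · obtain rfl | hst := eq_or_ne s t
    · obtain ⟨rfl, rfl⟩ : i = 1 ∧ j = 2 := by omega
      rw [h.lie_odd_even_self hs₁ hs₂, map_smul, map_sub, hφ 2 (by omega) (by omega),
        hφ 1 (by omega) (by omega), hε.two, ← smul_sub, hε.even s hs₁ hs₂, mul_left_comm,
        hε.mul_self, mul_one, smul_comm]
    · rw [h.lie_block_of_ne hs₁ hs₂ ht₁ ht₂ hst hi hj, map_zero, smul_zero]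

lemma exists_signed_automorphism (h : IsGnFrame_s11 n a D Z X Y e) {ε : ℕ → ℝ} (hε : IsGnSign n ε)
    (b : Module.Basis (Fin (2*n+2)) ℝ L) (hb : ∀ i : Fin (2*n+2), b i = e ((i : ℕ) + 1))
    (inn : L →ₗ[ℝ] L →ₗ[ℝ] ℝ)
    (horth : ∀ k l, 1 ≤ k → k ≤ 2*n+2 → 1 ≤ l → l ≤ 2*n+2 → k ≠ l → inn (e k) (e l) = 0) :
    ∃ φ : L ≃ₗ[ℝ] L, (∀ k, 1 ≤ k → k ≤ 2*n+2 → φ (e k) = ε k • e k) ∧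
      (∀ u v, ⁅φ u, φ v⁆ = φ ⁅u, v⁆) ∧ ∀ u v, inn (φ u) (φ v) = inn u v := by
  set w : Fin (2*n+2) → ℝ := fun i => ε ((i : ℕ) + 1)
  have hw : ∀ i, IsUnit (w i) := fun i => IsUnit.of_mul_eq_one _ (hε.mul_self _)
  let φ : L ≃ₗ[ℝ] L := b.equiv (b.isUnitSMul hw) (Equiv.refl _)
  have hφb : ∀ i, φ (b i) = w i • b i := fun i => by
    simp only [φ, Module.Basis.equiv_apply, Equiv.refl_apply, Module.Basis.isUnitSMul_apply]
  have hφe : ∀ k, 1 ≤ k → k ≤ 2*n+2 → φ (e k) = ε k • e k := by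
    intro k hk₁ hk₂
    obtain ⟨i, rfl⟩ : ∃ i : Fin (2*n+2), (i : ℕ) + 1 = k := ⟨⟨k - 1, by omega⟩, by simp; omega⟩
    rw [← hb, hφb]
  refine ⟨φ, hφe, b.map_lie_of_eigen φ.toLinearMap w hφb fun i j => ?_,
    b.apply_map_map_of_orthogonal inn (fun i j hij => ?_) φ.toLinearMap w
      (fun i => hε.mul_self _) hφb⟩
  · simp only [hb, w]
    exact h.map_lie_eq_smul hε φ.toLinearMap hφe (by omega) i.isLt (by omega) j.isLt
  · rw [hb, hb]
    exact horth _ _ (by omega) i.isLt (by omega) j.isLt fun hij' => hij (Fin.ext (by omega))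

end IsGnFrame_s11

/-- The signs of the automorphism `D ↦ -D`, `Z ↦ -Z`, `X s ↦ Y s`, `Y s ↦ X s`. -/
lemma isGnSign_swap (n : ℕ) : IsGnSign n fun k => if k % 2 = 1 ∧ 3 ≤ k then 1 else -1 where
  mul_self k := by split_ifs <;> norm_num
  two := by simp
  even s hs₁ _ := by split_ifs <;> first | omega | norm_num

/-- The signs of the automorphism `X s ↦ -X s`, `Y s ↦ -Y s`, for the `s` with
`p ∈ {2s+1, 2s+2}`. -/
lemma isGnSign_negBlock (n : ℕ) {p : ℕ} (hp : 3 ≤ p) :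
    IsGnSign n fun k => if (k - 1) / 2 = (p - 1) / 2 then -1 else 1 where
  mul_self k := by split_ifs <;> norm_num
  two := by split_ifs <;> first | omega | rfl
  even s _ _ := by split_ifs <;> first | omega | norm_num

lemma exists_isGnSign_mul_eq_neg_one {n i j : ℕ} (hi₁ : 1 ≤ i) (hj₁ : 1 ≤ j) (hij : i ≠ j)
    (h12 : ¬(i = 1 ∧ j = 2)) (h21 : ¬(i = 2 ∧ j = 1)) :
    ∃ ε : ℕ → ℝ, IsGnSign n ε ∧ ε i * ε j = -1 := by
  by_cases hblock : (i - 1) / 2 = (j - 1) / 2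
  · refine ⟨_, isGnSign_swap n, ?_⟩
    split_ifs <;> first | omega | norm_num
  · rcases le_or_gt 3 i with hi | hi
    · refine ⟨_, isGnSign_negBlock n hi, ?_⟩
      split_ifs <;> first | omega | norm_num
    · refine ⟨_, isGnSign_negBlock n (p := j) (by omega), ?_⟩
      split_ifs <;> first | omega | norm_num

theorem gn_ricci_off_diagonal_vanishes_general
    (n : ℕ)
    (a : ℕ → ℝ)
    (hapos : ∀ s, 1 ≤ s → s ≤ n → 0 < a s)
    (L : Type) [LieRing L] [LieAlgebra ℝ L]
    (D Z : L) (X Y : ℕ → L)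
    (hDX : ∀ s, 1 ≤ s → s ≤ n → ⁅D, X s⁆ = a s • X s)
    (hDY : ∀ s, 1 ≤ s → s ≤ n → ⁅D, Y s⁆ = (-(a s)) • Y s)
    (hXYs : ∀ s, 1 ≤ s → s ≤ n → ⁅X s, Y s⁆ = Z)
    (hDZ : ⁅D, Z⁆ = 0)
    (hXZ : ∀ s, 1 ≤ s → s ≤ n → ⁅X s, Z⁆ = 0)
    (hYZ : ∀ s, 1 ≤ s → s ≤ n → ⁅Y s, Z⁆ = 0)
    (hXX : ∀ s t, 1 ≤ s → s ≤ n → 1 ≤ t → t ≤ n → ⁅X s, X t⁆ = 0)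
    (hYY : ∀ s t, 1 ≤ s → s ≤ n → 1 ≤ t → t ≤ n → ⁅Y s, Y t⁆ = 0)
    (hXYd : ∀ s t, 1 ≤ s → s ≤ n → 1 ≤ t → t ≤ n → s ≠ t → ⁅X s, Y t⁆ = 0)
    (e : ℕ → L)
    (he1 : e 1 = D + Z) (he2 : e 2 = D - Z)
    (heodd : ∀ s, 1 ≤ s → s ≤ n → e (2*s+1) = Real.sqrt (a s) • (X s + Y s))
    (heeven : ∀ s, 1 ≤ s → s ≤ n → e (2*s+2) = Real.sqrt (a s) • (X s - Y s))
    (b : Module.Basis (Fin (2*n+2)) ℝ L)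
    (hb : ∀ i : Fin (2*n+2), b i = e ((i : ℕ) + 1))
    (lam : ℕ → ℝ)
    (inn : L →ₗ[ℝ] L →ₗ[ℝ] ℝ)
    (hinnpos : ∀ v : L, v ≠ 0 → 0 < inn v v)
    (hinne : ∀ i j, 1 ≤ i → i ≤ 2*n+2 → 1 ≤ j → j ≤ 2*n+2 →
      inn (e i) (e j) = if i = j then (lam i)^2 else 0)
    (f : ℕ → L) (hf : ∀ i, f i = (lam i)⁻¹ • e i)
    (nab : L →ₗ[ℝ] L →ₗ[ℝ] L)
    (hkoszul : ∀ U V W : L, inn (nab U V) W =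
      (1/2) * (inn ⁅U, V⁆ W - inn ⁅V, W⁆ U + inn ⁅W, U⁆ V))
    (Ric : L → L → ℝ)
    (hRic : ∀ U V : L, Ric U V = LinearMap.trace ℝ L
      (nab.flip (nab U V) - nab U ∘ₗ nab.flip V
        + nab.flip V ∘ₗ (LieAlgebra.ad ℝ L U : L →ₗ[ℝ] L)))
    :
    ∀ i j, 1 ≤ i → i ≤ 2*n+2 → 1 ≤ j → j ≤ 2*n+2 → i ≠ j →
      ¬(i = 1 ∧ j = 2) → ¬(i = 2 ∧ j = 1) →
      Ric (f i) (f j) = 0 := by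
  intro i j hi₁ hi₂ hj₁ hj₂ hij h12 h21
  have hF : IsGnFrame_s11 n a D Z X Y e :=
    ⟨hapos, hDX, hDY, hXYs, hDZ, hXZ, hYZ, hXX, hYY, hXYd, he1, he2, heodd, heeven⟩
  obtain ⟨ε, hε, hεij⟩ := exists_isGnSign_mul_eq_neg_one (n := n) hi₁ hj₁ hij h12 h21
  obtain ⟨φ, hφe, hlie, hiso⟩ := hF.exists_signed_automorphism hε b hb inn
    fun k l hk₁ hk₂ hl₁ hl₂ hkl => by rw [hinne k l hk₁ hk₂ hl₁ hl₂, if_neg hkl]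
  have hφf : ∀ k, 1 ≤ k → k ≤ 2*n+2 → φ (f k) = ε k • f k := fun k hk₁ hk₂ => by
    rw [hf, map_smul, hφe k hk₁ hk₂, smul_comm]
  rw [hRic]
  exact trace_ricciOperator_eq_zero_of_eigen inn hinnpos nab hkoszul φ hlie hiso
    (hφf i hi₁ hi₂) (hφf j hj₁ hj₂) hεij

/-- On 𝔤(n) with the metric ⟨e_i,e_j⟩ = δ_ij λ_i², the Ricci tensor vanishes
on all off-diagonal pairs (f_i, f_j) with {i,j} ≠ {1,2}. -/
theorem gn_ricci_off_diagonal_vanishes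
    (n : ℕ) (hn : 1 ≤ n)
    (a : ℕ → ℝ)
    (hapos : ∀ s, 1 ≤ s → s ≤ n → 0 < a s)
    (hamono : ∀ s t, 1 ≤ s → s ≤ t → t ≤ n → a s ≤ a t)
    (L : Type) [LieRing L] [LieAlgebra ℝ L] [FiniteDimensional ℝ L]
    (D Z : L) (X Y : ℕ → L)
    (hDX : ∀ s, 1 ≤ s → s ≤ n → ⁅D, X s⁆ = a s • X s)
    (hDY : ∀ s, 1 ≤ s → s ≤ n → ⁅D, Y s⁆ = (-(a s)) • Y s)
    (hXYs : ∀ s, 1 ≤ s → s ≤ n → ⁅X s, Y s⁆ = Z)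
    (hDZ : ⁅D, Z⁆ = 0)
    (hXZ : ∀ s, 1 ≤ s → s ≤ n → ⁅X s, Z⁆ = 0)
    (hYZ : ∀ s, 1 ≤ s → s ≤ n → ⁅Y s, Z⁆ = 0)
    (hXX : ∀ s t, 1 ≤ s → s ≤ n → 1 ≤ t → t ≤ n → ⁅X s, X t⁆ = 0)
    (hYY : ∀ s t, 1 ≤ s → s ≤ n → 1 ≤ t → t ≤ n → ⁅Y s, Y t⁆ = 0)
    (hXYd : ∀ s t, 1 ≤ s → s ≤ n → 1 ≤ t → t ≤ n → s ≠ t → ⁅X s, Y t⁆ = 0)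
    (e : ℕ → L)
    (he1 : e 1 = D + Z) (he2 : e 2 = D - Z)
    (heodd : ∀ s, 1 ≤ s → s ≤ n → e (2*s+1) = Real.sqrt (a s) • (X s + Y s))
    (heeven : ∀ s, 1 ≤ s → s ≤ n → e (2*s+2) = Real.sqrt (a s) • (X s - Y s))
    (b : Module.Basis (Fin (2*n+2)) ℝ L)
    (hb : ∀ i : Fin (2*n+2), b i = e ((i : ℕ) + 1))
    (lam : ℕ → ℝ) (hlam : ∀ i, 1 ≤ i → i ≤ 2*n+2 → lam i ≠ 0)
    (inn : L →ₗ[ℝ] L →ₗ[ℝ] ℝ)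
    (hinnsymm : ∀ u v : L, inn u v = inn v u)
    (hinnpos : ∀ v : L, v ≠ 0 → 0 < inn v v)
    (hinne : ∀ i j, 1 ≤ i → i ≤ 2*n+2 → 1 ≤ j → j ≤ 2*n+2 →
      inn (e i) (e j) = if i = j then (lam i)^2 else 0)
    (f : ℕ → L) (hf : ∀ i, f i = (lam i)⁻¹ • e i)
    (nab : L →ₗ[ℝ] L →ₗ[ℝ] L)
    (hkoszul : ∀ U V W : L, inn (nab U V) W =
      (1/2) * (inn ⁅U, V⁆ W - inn ⁅V, W⁆ U + inn ⁅W, U⁆ V))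
    (Ric : L → L → ℝ)
    (hRic : ∀ U V : L, Ric U V = LinearMap.trace ℝ L
      (nab.flip (nab U V) - nab U ∘ₗ nab.flip V
        + nab.flip V ∘ₗ (LieAlgebra.ad ℝ L U : L →ₗ[ℝ] L)))
    :
    ∀ i j, 1 ≤ i → i ≤ 2*n+2 → 1 ≤ j → j ≤ 2*n+2 → i ≠ j →
      ¬(i = 1 ∧ j = 2) → ¬(i = 2 ∧ j = 1) →
      Ric (f i) (f j) = 0 :=
  gn_ricci_off_diagonal_vanishes_general n a hapos L D Z X Y hDX hDY hXYs hDZ hXZ hYZ hXX hYY hXYd e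
    he1 he2 heodd heeven b hb lam inn hinnpos hinne f hf nab hkoszul Ric hRic
end

section
/- Fix an integer n ≥ 1, reals 0 < a_1 ≤ … ≤ a_n, and a real c ≠ 0, and set K = 4(Σ_{s=1}^n a_s²)·c⁴/a_1². Then the set {−n(t + K/t)·(2/K + a_1²/(2c⁴)) : t ∈ (0,∞)} ⊆ ℝ is infinite. Consequently, among the m-quasi-Einstein metrics on G(n) given by nonzero λ_1,…,λ_{2n+2} with λ_3 = c satisfying λ_{2s+1}² = λ_{2s+2}², λ_{2s+1}²/a_s constant in s, and λ_1² λ_2² = K (all of which have determinant 1 with respect to the orthonormal frame {f_i}), the scalar curvature S = −n(λ_1² + λ_2²)(2/(λ_1²λ_2²) + a_1²/(2c⁴)) takes infinitely many distinct values as λ_1² = t ranges over (0,∞); hence G(n) admits infinitely many non-equivalent non-trivial m-quasi-Einstein metrics for m finite. -/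
open Set

theorem not_bddAbove_image_add_div_Ioi {K : ℝ} (hK : 0 ≤ K) :
    ¬BddAbove ((fun t : ℝ => t + K / t) '' Ioi 0) := by
  rintro ⟨M, hM⟩
  have hle := hM ⟨max M 0 + 1, mem_Ioi.2 (by positivity), rfl⟩
  have : 0 ≤ K / (max M 0 + 1) := by positivity
  linarith [le_max_left M 0]

theorem infinite_setOf_mul_add_div {K α : ℝ} (hK : 0 ≤ K) (hα : α ≠ 0) :
    {x : ℝ | ∃ t : ℝ, 0 < t ∧ x = α * (t + K / t)}.Infinite := by
  have himage : {x : ℝ | ∃ t : ℝ, 0 < t ∧ x = α * (t + K / t)}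
      = (α * ·) '' ((fun t : ℝ => t + K / t) '' Ioi 0) := by
    ext x
    simp [eq_comm]
  rw [himage]
  exact (infinite_of_not_bddAbove (not_bddAbove_image_add_div_Ioi hK)).image
    (mul_right_injective₀ hα).injOn

theorem gn_infinitely_many_scalar_curvatures_general
    (n : ℕ) (hn : 1 ≤ n)
    (a : ℕ → ℝ)
    (hapos : ∀ s, 1 ≤ s → s ≤ n → 0 < a s)
    (c : ℝ) (hc : c ≠ 0)
    (K : ℝ) (hK : K = 4 * (∑ s ∈ Finset.Icc 1 n, (a s)^2) * c^4 / (a 1)^2) :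
    Set.Infinite {x : ℝ | ∃ t : ℝ, 0 < t ∧
      x = -(n : ℝ) * (t + K / t) * (2 / K + (a 1)^2 / (2 * c^4))} := by
  have hK_nonneg : 0 ≤ K := by rw [hK]; positivity
  have ha₁ : 0 < a 1 := hapos 1 le_rfl hn
  have hn_pos : (0 : ℝ) < n := by exact_mod_cast hn
  have hcoeff : 0 < 2 / K + (a 1)^2 / (2 * c^4) := by positivity
  convert infinite_setOf_mul_add_div hK_nonneg
    (mul_neg_of_neg_of_pos (neg_neg_of_pos hn_pos) hcoeff).ne using 5
  rw [mul_right_comm]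

/-- The set of scalar curvature values
`S = −n(t + K/t)(2/K + a₁²/(2c⁴))`, as `t = λ₁²` ranges over `(0,∞)` with
`K = 4(Σ a_s²)c⁴/a₁²` fixed, is infinite; hence `G(n)` admits infinitely many
non-equivalent non-trivial m-quasi-Einstein metrics for m finite. -/
theorem gn_infinitely_many_scalar_curvatures
    (n : ℕ) (hn : 1 ≤ n)
    (a : ℕ → ℝ)
    (hapos : ∀ s, 1 ≤ s → s ≤ n → 0 < a s)
    (hamono : ∀ s t, 1 ≤ s → s ≤ t → t ≤ n → a s ≤ a t)
    (c : ℝ) (hc : c ≠ 0)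
    (K : ℝ) (hK : K = 4 * (∑ s ∈ Finset.Icc 1 n, (a s)^2) * c^4 / (a 1)^2) :
    Set.Infinite {x : ℝ | ∃ t : ℝ, 0 < t ∧
      x = -(n : ℝ) * (t + K / t) * (2 / K + (a 1)^2 / (2 * c^4))} :=
  gn_infinitely_many_scalar_curvatures_general n hn a hapos c hc K hK
end

section
/- Let 𝔤 = 𝔤(1) be the 4-dimensional real Lie algebra with basis {D, X, Y, Z} and nonzero brackets [D,X] = X, [D,Y] = −Y, [X,Y] = Z, set e_1 = D+Z, e_2 = D−Z, e_3 = X+Y, e_4 = X−Y, and for nonzero reals λ_1, λ_2, λ_3, λ_4 define the inner product ⟨e_i,e_j⟩ = δ_ij λ_i² with f_i = e_i/λ_i. Then there exist m ∈ (0,∞) and λ ∈ ℝ such that, with X₀ = λ_1 f_1 − λ_2 f_2, Ric^m_{X₀}(Y,W) = λ⟨Y,W⟩ for all Y, W ∈ 𝔤, if and only if λ_3² = λ_4² and λ_1² λ_2² = 4λ_4⁴. -/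
/-!
In the frame e₁ = D + Z, e₂ = D − Z, e₃ = X + Y, e₄ = X − Y the metric is diagonal with
norms cᵢ = λᵢ², so the Koszul formula gives the Levi-Civita connection explicitly and the Ricci
tensor is a trace over the frame. The field X₀ = e₁ − e₂ turns out to be Killing, so
Ric^m_{X₀} = Ric − (1/m) X₀♭ ⊗ X₀♭, and the quasi-Einstein condition becomes a handful of
polynomial equations in the frame. The e₃ and e₄ entries force c₃ = c₄, after which the
(e₁, e₁), (e₁, e₂) and e₃ entries force c₁c₂ = 4c₄²; conversely m = c₄² and
λ = −(c₁ + c₂)/(2c₄²) solve all of them.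
-/

open Module Matrix

section OrthogonalBasis

variable {ι K M : Type*} [Fintype ι] [DecidableEq ι] [Field K] [AddCommGroup M] [Module K M]
  {B : M →ₗ[K] M →ₗ[K] K} {b : Basis ι K M} {c : ι → K}

theorem LinearMap.apply_basis_of_toMatrix₂_eq_diagonal (hB : B.toMatrix₂ b b = diagonal c)
    (i j : ι) : B (b i) (b j) = diagonal c i j := by
  rw [← hB, LinearMap.toMatrix₂_apply]

theorem Module.Basis.repr_eq_div_of_toMatrix₂_eq_diagonal (hB : B.toMatrix₂ b b = diagonal c)
    (hc : ∀ i, c i ≠ 0) (v : M) (i : ι) : b.repr v i = B v (b i) / c i := by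
  have hBi : B.flip (b i) = c i • b.coord i := b.ext fun j => by
    rw [LinearMap.flip_apply, B.apply_basis_of_toMatrix₂_eq_diagonal hB]
    rcases eq_or_ne j i with rfl | h
    · simp
    · simp [h, h.symm]
  rw [← B.flip_apply, hBi, eq_div_iff (hc i)]
  simp [mul_comm]

theorem Module.Basis.ext_of_toMatrix₂_eq_diagonal (hB : B.toMatrix₂ b b = diagonal c)
    (hc : ∀ i, c i ≠ 0) {v w : M} (h : ∀ i, B v (b i) = B w (b i)) : v = w :=
  b.ext_elem fun i => by simp only [b.repr_eq_div_of_toMatrix₂_eq_diagonal hB hc, h]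

theorem LinearMap.trace_eq_sum_of_toMatrix₂_eq_diagonal (hB : B.toMatrix₂ b b = diagonal c)
    (hc : ∀ i, c i ≠ 0) (T : M →ₗ[K] M) :
    LinearMap.trace K M T = ∑ i, B (T (b i)) (b i) / c i := by
  simp [LinearMap.trace_eq_matrix_trace K b, Matrix.trace, LinearMap.toMatrix_apply,
    b.repr_eq_div_of_toMatrix₂_eq_diagonal hB hc]

theorem LinearMap.toMatrix₂_mul_compl₁₂ (f g : M →ₗ[K] K) :
    ((LinearMap.mul K K).compl₁₂ f g).toMatrix₂ b b =
      vecMulVec (fun i => f (b i)) (fun j => g (b j)) := by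
  ext i j
  simp [vecMulVec]

end OrthogonalBasis

section Ricci

variable {R L : Type*} [CommRing R] [LieRing L] [LieAlgebra R L]

noncomputable def ricciForm (nab : L →ₗ[R] L →ₗ[R] L) : L →ₗ[R] L →ₗ[R] R :=
  (nab.compr₂ nab.flip - (LinearMap.llcomp R L L L).compl₁₂ nab nab.flip +
    ((LinearMap.llcomp R L L L).compl₁₂ nab.flip
      (LieAlgebra.ad R L : L →ₗ[R] Module.End R L)).flip).compr₂ (LinearMap.trace R L)

theorem ricciForm_apply (nab : L →ₗ[R] L →ₗ[R] L) (U V : L) :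
    ricciForm nab U V = LinearMap.trace R L (nab.flip (nab U V) - nab U ∘ₗ nab.flip V
      + nab.flip V ∘ₗ (LieAlgebra.ad R L U : L →ₗ[R] L)) := rfl

end Ricci

section G1

variable {L : Type*} [LieRing L]

/-- The brackets of `𝔤(1)` in the frame `v = (D + Z, D - Z, X + Y, X - Y)`, indexed from `0`. -/
def g1Bracket (v : Fin 4 → L) : Matrix (Fin 4) (Fin 4) L :=
  !![0, 0, v 3, v 2;
     0, 0, v 3, v 2;
     -v 3, -v 3, 0, v 1 - v 0;
     -v 2, -v 2, v 0 - v 1, 0]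

theorem lie_eq_g1Bracket {D X Y Z : L} (hDX : ⁅D, X⁆ = X) (hDY : ⁅D, Y⁆ = -Y)
    (hXY : ⁅X, Y⁆ = Z) (hDZ : ⁅D, Z⁆ = 0) (hXZ : ⁅X, Z⁆ = 0) (hYZ : ⁅Y, Z⁆ = 0) (i j : Fin 4) :
    ⁅![D + Z, D - Z, X + Y, X - Y] i, ![D + Z, D - Z, X + Y, X - Y] j⁆ =
      g1Bracket ![D + Z, D - Z, X + Y, X - Y] i j := by
  have hXD : ⁅X, D⁆ = -X := by rw [← lie_skew, hDX]
  have hYD : ⁅Y, D⁆ = Y := by rw [← lie_skew, hDY, neg_neg]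
  have hYX : ⁅Y, X⁆ = -Z := by rw [← lie_skew, hXY]
  have hZD : ⁅Z, D⁆ = 0 := by rw [← lie_skew, hDZ, neg_zero]
  have hZX : ⁅Z, X⁆ = 0 := by rw [← lie_skew, hXZ, neg_zero]
  have hZY : ⁅Z, Y⁆ = 0 := by rw [← lie_skew, hYZ, neg_zero]
  fin_cases i <;> fin_cases j <;>
    simp [g1Bracket, hDX, hDY, hXY, hDZ, hXZ, hYZ, hXD, hYD, hYX, hZD, hZX, hZY] <;> abel

variable [LieAlgebra ℝ L]

noncomputable def g1Christoffel (v : Fin 4 → L) (c : Fin 4 → ℝ) : Matrix (Fin 4) (Fin 4) L :=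
  !![0, 0, ((c 3 + c 0 - c 2) / (2 * c 3)) • v 3, ((c 2 - c 0 - c 3) / (2 * c 2)) • v 2;
     0, 0, ((c 3 - c 1 - c 2) / (2 * c 3)) • v 3, ((c 2 + c 1 - c 3) / (2 * c 2)) • v 2;
     ((c 0 - c 2 - c 3) / (2 * c 3)) • v 3, (-(c 1 + c 2 + c 3) / (2 * c 3)) • v 3, 0,
       ((c 2 + c 3 - c 0) / (2 * c 0)) • v 0 + ((c 1 + c 2 + c 3) / (2 * c 1)) • v 1;
     (-(c 0 + c 2 + c 3) / (2 * c 2)) • v 2, ((c 1 - c 2 - c 3) / (2 * c 2)) • v 2,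
       ((c 0 + c 2 + c 3) / (2 * c 0)) • v 0 + ((c 2 + c 3 - c 1) / (2 * c 1)) • v 1, 0]

noncomputable def g1Ricci (c : Fin 4 → ℝ) : Matrix (Fin 4) (Fin 4) ℝ :=
  !![(c 0 ^ 2 - (c 2 + c 3) ^ 2) / (2 * c 2 * c 3),
       -(c 0 * c 1 + (c 2 + c 3) ^ 2) / (2 * c 2 * c 3), 0, 0;
     -(c 0 * c 1 + (c 2 + c 3) ^ 2) / (2 * c 2 * c 3),
       (c 1 ^ 2 - (c 2 + c 3) ^ 2) / (2 * c 2 * c 3), 0, 0;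
     0, 0, (c 0 + c 1) * (c 2 ^ 2 - c 3 ^ 2 - c 0 * c 1) / (2 * c 0 * c 1 * c 3), 0;
     0, 0, 0, (c 0 + c 1) * (c 3 ^ 2 - c 2 ^ 2 - c 0 * c 1) / (2 * c 0 * c 1 * c 2)]

variable {b : Basis (Fin 4) ℝ L} {c : Fin 4 → ℝ} {inn : L →ₗ[ℝ] L →ₗ[ℝ] ℝ}
  {nab : L →ₗ[ℝ] L →ₗ[ℝ] L}

theorem nab_eq_g1Christoffel (hbr : ∀ i j, ⁅b i, b j⁆ = g1Bracket b i j)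
    (hinn : inn.toMatrix₂ b b = diagonal c) (hc : ∀ i, c i ≠ 0)
    (hkoszul : ∀ U V W : L, inn (nab U V) W =
      (1/2) * (inn ⁅U, V⁆ W - inn ⁅V, W⁆ U + inn ⁅W, U⁆ V)) (i j : Fin 4) :
    nab (b i) (b j) = g1Christoffel b c i j := by
  have h0 := hc 0; have h1 := hc 1; have h2 := hc 2; have h3 := hc 3
  refine b.ext_of_toMatrix₂_eq_diagonal hinn hc fun k => ?_
  rw [hkoszul]
  fin_cases i <;> fin_cases j <;> fin_cases k <;>
    simp [hbr, g1Bracket, g1Christoffel, inn.apply_basis_of_toMatrix₂_eq_diagonal hinn] <;>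
    field_simp <;> ring

theorem toMatrix₂_ricciForm_eq_g1Ricci (hbr : ∀ i j, ⁅b i, b j⁆ = g1Bracket b i j)
    (hinn : inn.toMatrix₂ b b = diagonal c) (hc : ∀ i, c i ≠ 0)
    (hnab : ∀ i j, nab (b i) (b j) = g1Christoffel b c i j) :
    (ricciForm nab).toMatrix₂ b b = g1Ricci c := by
  have h0 := hc 0; have h1 := hc 1; have h2 := hc 2; have h3 := hc 3
  ext i j
  rw [LinearMap.toMatrix₂_apply, ricciForm_apply,
    LinearMap.trace_eq_sum_of_toMatrix₂_eq_diagonal hinn hc, Fin.sum_univ_four]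
  fin_cases i <;> fin_cases j <;>
    simp [hbr, g1Bracket, g1Christoffel, hnab, g1Ricci,
      inn.apply_basis_of_toMatrix₂_eq_diagonal hinn] <;> field_simp <;> ring

/-- `b 0 - b 1` is a Killing field, so it drops out of the Hessian term of `Ric^m`. -/
theorem killing_sub_of_nab_eq_g1Christoffel (hinn : inn.toMatrix₂ b b = diagonal c)
    (hc : ∀ i, c i ≠ 0) (hnab : ∀ i j, nab (b i) (b j) = g1Christoffel b c i j) (U W : L) :
    inn (nab U (b 0 - b 1)) W + inn U (nab W (b 0 - b 1)) = 0 := by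
  have h0 := hc 0; have h1 := hc 1; have h2 := hc 2; have h3 := hc 3
  have hsymm : inn ∘ₗ nab.flip (b 0 - b 1) + inn.compl₂ (nab.flip (b 0 - b 1)) = 0 :=
    LinearMap.ext_basis b b fun i j => by
      fin_cases i <;> fin_cases j <;>
        simp [hnab, g1Christoffel, inn.apply_basis_of_toMatrix₂_eq_diagonal hinn] <;>
        field_simp <;> ring
  simpa using LinearMap.congr_fun₂ hsymm U W

end G1

theorem g1Ricci_sub_eq_smul_diagonal_iff {c : Fin 4 → ℝ} (hc : ∀ i, 0 < c i) :
    (∃ m : ℝ, 0 < m ∧ ∃ l : ℝ,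
      g1Ricci c - (1 / m) • vecMulVec ![c 0, -c 1, 0, 0] ![c 0, -c 1, 0, 0] = l • diagonal c) ↔
    c 2 = c 3 ∧ c 0 * c 1 = 4 * c 3 ^ 2 := by
  have h0 := hc 0; have h1 := hc 1; have h2 := hc 2; have h3 := hc 3
  constructor
  · rintro ⟨m, hm, l, h⟩
    have entry (i j : Fin 4) := congrFun (congrFun h i) j
    have e00 : (c 0 ^ 2 - (c 2 + c 3) ^ 2) / (2 * c 2 * c 3) - 1 / m * (c 0 * c 0) = l * c 0 := by
      simpa [g1Ricci, vecMulVec] using entry 0 0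
    have e01 : -(c 0 * c 1 + (c 2 + c 3) ^ 2) / (2 * c 2 * c 3) - 1 / m * (c 0 * -c 1) = 0 := by
      simpa [g1Ricci, vecMulVec] using entry 0 1
    have e22 : (c 0 + c 1) * (c 2 ^ 2 - c 3 ^ 2 - c 0 * c 1) / (2 * c 0 * c 1 * c 3) = l * c 2 := by
      simpa [g1Ricci, vecMulVec] using entry 2 2
    have e33 : (c 0 + c 1) * (c 3 ^ 2 - c 2 ^ 2 - c 0 * c 1) / (2 * c 0 * c 1 * c 2) = l * c 3 := by
      simpa [g1Ricci, vecMulVec] using entry 3 3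
    field_simp at e00 e01 e22 e33
    have h23 : c 2 = c 3 := by
      have h : (c 0 + c 1) * c 2 ^ 2 = (c 0 + c 1) * c 3 ^ 2 := by
        linear_combination (e22 - e33) / 2
      exact (pow_left_inj₀ h2.le h3.le two_ne_zero).mp (mul_left_cancel₀ (by positivity) h)
    refine ⟨h23, ?_⟩
    rw [h23] at e00 e01 e22
    have h : m * (c 0 + c 1) * (c 0 * c 1) = m * (c 0 + c 1) * (4 * c 3 ^ 2) := by
      linear_combination c 1 * e00 + c 0 * e01 - m * e22
    exact mul_left_cancel₀ (by positivity) h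
  · rintro ⟨h23, h01⟩
    have hc1 : c 1 = 4 * c 3 ^ 2 / c 0 := by field_simp; linear_combination h01
    refine ⟨c 3 ^ 2, by positivity, -(c 0 + c 1) / (2 * c 3 ^ 2), ?_⟩
    ext i j
    fin_cases i <;> fin_cases j <;> simp [g1Ricci, vecMulVec, h23, hc1] <;> field_simp <;> ring

theorem g1_quasi_einstein_iff_general
    (L : Type) [LieRing L] [LieAlgebra ℝ L]
    (D X Y Z : L)
    (hDX : ⁅D, X⁆ = X) (hDY : ⁅D, Y⁆ = -Y) (hXY : ⁅X, Y⁆ = Z)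
    (hDZ : ⁅D, Z⁆ = 0) (hXZ : ⁅X, Z⁆ = 0) (hYZ : ⁅Y, Z⁆ = 0)
    (e : ℕ → L)
    (he1 : e 1 = D + Z) (he2 : e 2 = D - Z)
    (he3 : e 3 = X + Y) (he4 : e 4 = X - Y)
    (b : Module.Basis (Fin 4) ℝ L)
    (hb : ∀ i : Fin 4, b i = e ((i : ℕ) + 1))
    (lam : ℕ → ℝ) (hlam : ∀ i, 1 ≤ i → i ≤ 4 → lam i ≠ 0)
    (inn : L →ₗ[ℝ] L →ₗ[ℝ] ℝ)
    (hinne : ∀ i j, 1 ≤ i → i ≤ 4 → 1 ≤ j → j ≤ 4 →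
      inn (e i) (e j) = if i = j then (lam i)^2 else 0)
    (f : ℕ → L) (hf : ∀ i, f i = (lam i)⁻¹ • e i)
    (nab : L →ₗ[ℝ] L →ₗ[ℝ] L)
    (hkoszul : ∀ U V W : L, inn (nab U V) W =
      (1/2) * (inn ⁅U, V⁆ W - inn ⁅V, W⁆ U + inn ⁅W, U⁆ V))
    (Ric : L → L → ℝ)
    (hRic : ∀ U V : L, Ric U V = LinearMap.trace ℝ L
      (nab.flip (nab U V) - nab U ∘ₗ nab.flip V
        + nab.flip V ∘ₗ (LieAlgebra.ad ℝ L U : L →ₗ[ℝ] L)))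
    (X0 : L) (hX0 : X0 = lam 1 • f 1 - lam 2 • f 2) :
    (∃ m : ℝ, 0 < m ∧ ∃ l : ℝ, ∀ U W : L,
      Ric U W + (1/2) * (inn (nab U X0) W + inn U (nab W X0))
        - (1/m) * (inn X0 U * inn X0 W) = l * inn U W) ↔
    (lam 3^2 = lam 4^2 ∧ lam 1^2 * lam 2^2 = 4 * lam 4^4) := by
  set c : Fin 4 → ℝ := fun i => lam (i + 1) ^ 2
  have hc : ∀ i, 0 < c i := fun i => sq_pos_of_ne_zero (hlam _ (by omega) (by omega))
  have hc₀ : ∀ i, c i ≠ 0 := fun i => (hc i).ne'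
  have hb_eq : ⇑b = ![D + Z, D - Z, X + Y, X - Y] := by
    funext i; fin_cases i <;> simp [hb, he1, he2, he3, he4]
  have hbr : ∀ i j, ⁅b i, b j⁆ = g1Bracket b i j := by
    rw [hb_eq]; exact lie_eq_g1Bracket hDX hDY hXY hDZ hXZ hYZ
  have hinn : inn.toMatrix₂ b b = diagonal c := by
    ext i j
    rw [LinearMap.toMatrix₂_apply, hb, hb, hinne _ _ (by omega) (by omega) (by omega) (by omega)]
    simp [diagonal_apply, c, Fin.val_inj]
  have hnab := nab_eq_g1Christoffel hbr hinn hc₀ hkoszul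
  obtain rfl : X0 = b 0 - b 1 := by simp [hX0, hf, hb, smul_smul, hlam]
  have hX0inn : (fun i => inn (b 0 - b 1) (b i)) = ![c 0, -c 1, 0, 0] := by
    funext i
    fin_cases i <;> simp [inn.apply_basis_of_toMatrix₂_eq_diagonal hinn]
  calc _ ↔ ∃ m : ℝ, 0 < m ∧ ∃ l : ℝ, ricciForm nab -
        (1 / m) • (LinearMap.mul ℝ ℝ).compl₁₂ (inn (b 0 - b 1)) (inn (b 0 - b 1)) = l • inn := by
        simp only [LinearMap.ext_iff₂, LinearMap.sub_apply, LinearMap.smul_apply,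
          LinearMap.compl₁₂_apply, LinearMap.mul_apply', smul_eq_mul, ricciForm_apply, hRic,
          killing_sub_of_nab_eq_g1Christoffel hinn hc₀ hnab, mul_zero, add_zero]
    _ ↔ ∃ m : ℝ, 0 < m ∧ ∃ l : ℝ,
        g1Ricci c - (1 / m) • vecMulVec ![c 0, -c 1, 0, 0] ![c 0, -c 1, 0, 0] = l • diagonal c := by
        refine exists_congr fun m => and_congr_right fun _ => exists_congr fun l => ?_
        rw [← (LinearMap.toMatrix₂ b b).injective.eq_iff,
          map_sub (LinearMap.toMatrix₂ b b) (ricciForm nab), map_smul, map_smul, hinn,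
          toMatrix₂_ricciForm_eq_g1Ricci hbr hinn hc₀ hnab, LinearMap.toMatrix₂_mul_compl₁₂,
          hX0inn]
    _ ↔ c 2 = c 3 ∧ c 0 * c 1 = 4 * c 3 ^ 2 := g1Ricci_sub_eq_smul_diagonal_iff hc
    _ ↔ _ := by
        simp only [c, Fin.isValue, Fin.val_zero, Fin.val_one, Fin.val_two, ← pow_mul]
        rfl

/-- On the 4-dimensional quadratic Lie algebra 𝔤(1) (brackets [D,X]=X,
[D,Y]=−Y, [X,Y]=Z), with the metric ⟨e_i,e_j⟩ = δ_ij λ_i², the metric is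
m-quasi-Einstein with vector field X₀ = λ₁f₁ − λ₂f₂ for some m ∈ (0,∞) and
λ ∈ ℝ if and only if λ₃² = λ₄² and λ₁²λ₂² = 4λ₄⁴. -/
theorem g1_quasi_einstein_iff
    (L : Type) [LieRing L] [LieAlgebra ℝ L] [FiniteDimensional ℝ L]
    (D X Y Z : L)
    (hDX : ⁅D, X⁆ = X) (hDY : ⁅D, Y⁆ = -Y) (hXY : ⁅X, Y⁆ = Z)
    (hDZ : ⁅D, Z⁆ = 0) (hXZ : ⁅X, Z⁆ = 0) (hYZ : ⁅Y, Z⁆ = 0)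
    (e : ℕ → L)
    (he1 : e 1 = D + Z) (he2 : e 2 = D - Z)
    (he3 : e 3 = X + Y) (he4 : e 4 = X - Y)
    (b : Module.Basis (Fin 4) ℝ L)
    (hb : ∀ i : Fin 4, b i = e ((i : ℕ) + 1))
    (lam : ℕ → ℝ) (hlam : ∀ i, 1 ≤ i → i ≤ 4 → lam i ≠ 0)
    (inn : L →ₗ[ℝ] L →ₗ[ℝ] ℝ)
    (hinnsymm : ∀ u v : L, inn u v = inn v u)
    (hinnpos : ∀ v : L, v ≠ 0 → 0 < inn v v)
    (hinne : ∀ i j, 1 ≤ i → i ≤ 4 → 1 ≤ j → j ≤ 4 →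
      inn (e i) (e j) = if i = j then (lam i)^2 else 0)
    (f : ℕ → L) (hf : ∀ i, f i = (lam i)⁻¹ • e i)
    (nab : L →ₗ[ℝ] L →ₗ[ℝ] L)
    (hkoszul : ∀ U V W : L, inn (nab U V) W =
      (1/2) * (inn ⁅U, V⁆ W - inn ⁅V, W⁆ U + inn ⁅W, U⁆ V))
    (Ric : L → L → ℝ)
    (hRic : ∀ U V : L, Ric U V = LinearMap.trace ℝ L
      (nab.flip (nab U V) - nab U ∘ₗ nab.flip V
        + nab.flip V ∘ₗ (LieAlgebra.ad ℝ L U : L →ₗ[ℝ] L)))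
    (X0 : L) (hX0 : X0 = lam 1 • f 1 - lam 2 • f 2) :
    (∃ m : ℝ, 0 < m ∧ ∃ l : ℝ, ∀ U W : L,
      Ric U W + (1/2) * (inn (nab U X0) W + inn U (nab W X0))
        - (1/m) * (inn X0 U * inn X0 W) = l * inn U W) ↔
    (lam 3^2 = lam 4^2 ∧ lam 1^2 * lam 2^2 = 4 * lam 4^4) :=
  g1_quasi_einstein_iff_general L D X Y Z hDX hDY hXY hDZ hXZ hYZ e he1 he2 he3 he4 b hb lam hlam
    inn hinne f hf nab hkoszul Ric hRic X0 hX0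
end
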